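/- arXiv:1210.7841 — 8 statements merged into one kernel-verified Lean document; each statement's English description precedes it below -/
import Mathlib

section
/- There are exactly 1 + p + p^2 + ... + p^N left ideals of norm p^N in Mat_2(Z_p), and each such ideal is generated by an upper triangular matrix of the form [[p^n, t],[0, p^m]] with n + m = N and t ∈ Z_p; the triple (n, m, t mod p^m) uniquely determines the ideal. -/
open Matrix

/-- The matrix `[[p^n, t],[0, p^m]]` over `ℤ_[p]`. -/
noncomputable def genMat (p : ℕ) [Fact p.Prime] (n m : ℕ) (t : ℤ_[p]) :
    Matrix (Fin 2) (Fin 2) ℤ_[p] :=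
  !![(p : ℤ_[p]) ^ n, t; 0, (p : ℤ_[p]) ^ m]

/-- A left ideal of `Mat₂(ℤ_p)` has norm `p^N` if it is generated by an element whose
determinant (reduced norm) has valuation `N`. -/
def hasNorm (p : ℕ) [Fact p.Prime] (I : Ideal (Matrix (Fin 2) (Fin 2) ℤ_[p])) (N : ℕ) : Prop :=
  ∃ g : Matrix (Fin 2) (Fin 2) ℤ_[p], I = Ideal.span {g} ∧ ‖g.det‖ = (p : ℝ) ^ (-(N : ℤ))


/-! Over a valuation ring every matrix can be brought to upper triangular form by elementary row
operations (swap the rows if needed so that the `(0,0)` entry divides the `(1,0)` entry, then clear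
the latter). In `ℤ_[p]` the diagonal entries are units times powers of `p`, and rescaling the rows
gives the generator `[[p^n, t], [0, p^m]]`. Conversely, if one such generator is a left multiple of
another of the same norm, comparing the diagonal entries forces equal exponents and a unipotent
multiplier, which can only shift `t` by a multiple of `p^m`. Counting the triples
`(n, m, t mod p^m)` with `n + m = N` gives `∑_{m ≤ N} p^m`. -/

namespace Matrix

theorem isUnit_transvection {n R : Type*} [Fintype n] [DecidableEq n] [CommRing R] {i j : n}
    (hij : i ≠ j) (c : R) : IsUnit (transvection i j c) := by
  rw [isUnit_iff_isUnit_det]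
  simp [hij]

theorem exists_isUnit_mul_apply_one_zero_eq_zero {R : Type*} [CommRing R] [PreValuationRing R]
    (A : Matrix (Fin 2) (Fin 2) R) :
    ∃ U : Matrix (Fin 2) (Fin 2) R, IsUnit U ∧ (U * A) 1 0 = 0 := by
  have clear_of_dvd : ∀ B : Matrix (Fin 2) (Fin 2) R, B 0 0 ∣ B 1 0 →
      ∃ U : Matrix (Fin 2) (Fin 2) R, IsUnit U ∧ (U * B) 1 0 = 0 := by
    rintro B ⟨q, hq⟩
    refine ⟨transvection 1 0 (-q), isUnit_transvection (by decide) _, ?_⟩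
    rw [transvection_mul_apply_same, hq]
    ring
  rcases ValuationRing.dvd_total (A 0 0) (A 1 0) with h | h
  · exact clear_of_dvd A h
  · obtain ⟨U, hU, hUA⟩ := clear_of_dvd (swap R 0 1 * A) (by
      simpa [swap_mul_apply_left, swap_mul_apply_right] using h)
    exact ⟨U * swap R 0 1, hU.mul (GeneralLinearGroup.swap R 0 1).isUnit, by rwa [mul_assoc]⟩

end Matrix

section genMat

variable {p : ℕ} [Fact p.Prime]

theorem det_genMat (n m : ℕ) (t : ℤ_[p]) : (genMat p n m t).det = (p : ℤ_[p]) ^ (n + m) := by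
  simp [genMat, det_fin_two_of, pow_add]

theorem norm_det_genMat (n m : ℕ) (t : ℤ_[p]) :
    ‖(genMat p n m t).det‖ = (p : ℝ) ^ (-((n + m : ℕ) : ℤ)) := by
  rw [det_genMat, PadicInt.norm_p_pow]

theorem mul_genMat (a : Matrix (Fin 2) (Fin 2) ℤ_[p]) (n m : ℕ) (t : ℤ_[p]) :
    a * genMat p n m t = !![a 0 0 * (p : ℤ_[p]) ^ n, a 0 0 * t + a 0 1 * (p : ℤ_[p]) ^ m;
      a 1 0 * (p : ℤ_[p]) ^ n, a 1 0 * t + a 1 1 * (p : ℤ_[p]) ^ m] := by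
  rw [eta_fin_two a, genMat, mul_fin_two]
  simp

theorem exists_isUnit_mul_eq_genMat_of_apply_one_zero_eq_zero {B : Matrix (Fin 2) (Fin 2) ℤ_[p]}
    (hB : B 1 0 = 0) (hdet : B.det ≠ 0) :
    ∃ D, IsUnit D ∧ ∃ n m t, D * B = genMat p n m t := by
  rw [det_fin_two, hB, mul_zero, sub_zero] at hdet
  have h0 : B 0 0 ≠ 0 := left_ne_zero_of_mul hdet
  have h1 : B 1 1 ≠ 0 := right_ne_zero_of_mul hdet
  refine ⟨diagonal ![↑(PadicInt.unitCoeff h0)⁻¹, ↑(PadicInt.unitCoeff h1)⁻¹], ?_,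
    (B 0 0).valuation, (B 1 1).valuation, ↑(PadicInt.unitCoeff h0)⁻¹ * B 0 1, ?_⟩
  · rw [isUnit_diagonal, Pi.isUnit_iff]
    intro i
    fin_cases i <;> simp
  · ext i j
    fin_cases i <;> fin_cases j
    all_goals
      simp only [diagonal_mul, genMat]
      simp
    · exact (Units.inv_mul_eq_iff_eq_mul _).mpr (PadicInt.unitCoeff_spec h0)
    · exact hB
    · exact (Units.inv_mul_eq_iff_eq_mul _).mpr (PadicInt.unitCoeff_spec h1)

theorem exists_isUnit_mul_eq_genMat {g : Matrix (Fin 2) (Fin 2) ℤ_[p]} (hg : g.det ≠ 0) :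
    ∃ U, IsUnit U ∧ ∃ n m t, U * g = genMat p n m t := by
  obtain ⟨U, hU, hUg⟩ := exists_isUnit_mul_apply_one_zero_eq_zero g
  have hdet : (U * g).det ≠ 0 := by
    rw [det_mul]
    exact mul_ne_zero ((isUnit_iff_isUnit_det U).mp hU).ne_zero hg
  obtain ⟨D, hD, n, m, t, hDUg⟩ := exists_isUnit_mul_eq_genMat_of_apply_one_zero_eq_zero hUg hdet
  exact ⟨D * U, hD.mul hU, n, m, t, by rw [mul_assoc, hDUg]⟩

theorem exists_eq_span_genMat_of_hasNorm {I : Ideal (Matrix (Fin 2) (Fin 2) ℤ_[p])} {N : ℕ}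
    (hI : hasNorm p I N) : ∃ n m t, n + m = N ∧ I = Ideal.span {genMat p n m t} := by
  obtain ⟨g, rfl, hnorm⟩ := hI
  have hg : g.det ≠ 0 := by
    intro h
    rw [h, norm_zero] at hnorm
    exact (zpow_pos (by exact_mod_cast (Fact.out : p.Prime).pos) _).ne' hnorm.symm
  obtain ⟨U, hU, n, m, t, hUg⟩ := exists_isUnit_mul_eq_genMat hg
  refine ⟨n, m, t, ?_, by rw [← hUg, Ideal.span_singleton_mul_left_unit hU]⟩
  have hnorm' : (p : ℝ) ^ (-((n + m : ℕ) : ℤ)) = (p : ℝ) ^ (-(N : ℤ)) := by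
    rw [← norm_det_genMat n m t, ← hUg, det_mul, norm_mul,
      PadicInt.isUnit_iff.mp ((isUnit_iff_isUnit_det U).mp hU), one_mul, hnorm]
  have := zpow_right_injective₀ (by exact_mod_cast (Fact.out : p.Prime).pos)
    (by exact_mod_cast (Fact.out : p.Prime).ne_one) hnorm'
  omega

theorem span_genMat_eq_span_genMat_iff {n m n' m' : ℕ} {t t' : ℤ_[p]} (h : n + m = n' + m') :
    Ideal.span {genMat p n m t} = Ideal.span {genMat p n' m' t'} ↔
      n = n' ∧ m = m' ∧ (p : ℤ_[p]) ^ m ∣ t - t' := by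
  have hp : (p : ℤ_[p]) ≠ 0 := PadicInt.prime_p.ne_zero
  constructor
  · intro hspan
    have hmem : genMat p n' m' t' ∈ Ideal.span {genMat p n m t} :=
      hspan ▸ Ideal.mem_span_singleton_self _
    obtain ⟨a, ha⟩ := Ideal.mem_span_singleton'.mp hmem
    rw [mul_genMat, genMat] at ha
    have h00 : a 0 0 * (p : ℤ_[p]) ^ n = (p : ℤ_[p]) ^ n' := by simpa using congrFun₂ ha 0 0
    have h01 : a 0 0 * t + a 0 1 * (p : ℤ_[p]) ^ m = t' := by simpa using congrFun₂ ha 0 1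
    have h10 : a 1 0 = 0 := by simpa [hp] using congrFun₂ ha 1 0
    have h11 : a 1 1 * (p : ℤ_[p]) ^ m = (p : ℤ_[p]) ^ m' := by simpa [h10] using congrFun₂ ha 1 1
    have hn : n ≤ n' := (pow_dvd_pow_iff hp PadicInt.prime_p.not_isUnit).mp (Dvd.intro_left _ h00)
    have hm : m ≤ m' := (pow_dvd_pow_iff hp PadicInt.prime_p.not_isUnit).mp (Dvd.intro_left _ h11)
    obtain rfl : n = n' := by omega
    obtain rfl : m = m' := by omega
    have ha00 : a 0 0 = 1 := (mul_eq_right₀ (pow_ne_zero n hp)).mp h00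
    refine ⟨rfl, rfl, -a 0 1, ?_⟩
    rw [← h01, ha00]
    ring
  · rintro ⟨rfl, rfl, s, hs⟩
    have hshift : genMat p n m t' = transvection 0 1 (-s) * genMat p n m t := by
      rw [mul_genMat, genMat]
      simp [transvection]
      linear_combination -hs
    rw [hshift, Ideal.span_singleton_mul_left_unit (isUnit_transvection (by decide) _)]

end genMat

section count

open Finset

variable {p : ℕ} [Fact p.Prime]

theorem PadicInt.pow_dvd_sub_iff_toZModPow_eq {m : ℕ} {x y : ℤ_[p]} :
    (p : ℤ_[p]) ^ m ∣ x - y ↔ PadicInt.toZModPow m x = PadicInt.toZModPow m y := by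
  rw [← sub_eq_zero, ← map_sub, ← RingHom.mem_ker, PadicInt.ker_toZModPow,
    Ideal.mem_span_singleton]

theorem PadicInt.toZModPow_natCast_val {m : ℕ} (r : ZMod (p ^ m)) :
    PadicInt.toZModPow m (r.val : ℤ_[p]) = r := by
  rw [map_natCast, ZMod.natCast_zmod_val]

noncomputable def spanGenMatOfTriple (p : ℕ) [Fact p.Prime] (N : ℕ)
    (x : Σ nm : antidiagonal N, ZMod (p ^ nm.1.2)) : Ideal (Matrix (Fin 2) (Fin 2) ℤ_[p]) :=
  Ideal.span {genMat p x.1.1.1 x.1.1.2 (x.2.val : ℤ_[p])}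

theorem spanGenMatOfTriple_injective (N : ℕ) : Function.Injective (spanGenMatOfTriple p N) := by
  rintro ⟨⟨⟨n, m⟩, hnm⟩, r⟩ ⟨⟨⟨n', m'⟩, hnm'⟩, r'⟩ h
  have hsum : n + m = n' + m' :=
    (HasAntidiagonal.mem_antidiagonal.mp hnm).trans (HasAntidiagonal.mem_antidiagonal.mp hnm').symm
  obtain ⟨rfl, rfl, hdvd⟩ := (span_genMat_eq_span_genMat_iff hsum).mp h
  rw [PadicInt.pow_dvd_sub_iff_toZModPow_eq, PadicInt.toZModPow_natCast_val,
    PadicInt.toZModPow_natCast_val] at hdvd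
  subst hdvd
  rfl

theorem range_spanGenMatOfTriple (N : ℕ) :
    Set.range (spanGenMatOfTriple p N) = {I | hasNorm p I N} := by
  ext I
  constructor
  · rintro ⟨⟨⟨⟨n, m⟩, hnm⟩, r⟩, rfl⟩
    refine ⟨_, rfl, ?_⟩
    rw [norm_det_genMat, HasAntidiagonal.mem_antidiagonal.mp hnm]
  · intro hI
    obtain ⟨n, m, t, hnm, rfl⟩ := exists_eq_span_genMat_of_hasNorm hI
    refine ⟨⟨⟨(n, m), HasAntidiagonal.mem_antidiagonal.mpr hnm⟩, PadicInt.toZModPow m t⟩, ?_⟩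
    refine (span_genMat_eq_span_genMat_iff rfl).mpr ⟨rfl, rfl, ?_⟩
    rw [PadicInt.pow_dvd_sub_iff_toZModPow_eq, PadicInt.toZModPow_natCast_val]

theorem ncard_setOf_hasNorm (N : ℕ) :
    Set.ncard {I | hasNorm p I N} = ∑ i ∈ Finset.range (N + 1), p ^ i := by
  rw [← range_spanGenMatOfTriple, Set.ncard_range_of_injective (spanGenMatOfTriple_injective N),
    Nat.card_eq_fintype_card, Fintype.card_sigma]
  simp only [ZMod.card]
  rw [Finset.sum_coe_sort (antidiagonal N) (fun nm => p ^ nm.2),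
    ← Finset.Nat.sum_antidiagonal_swap]
  exact Finset.Nat.sum_antidiagonal_eq_sum_range_succ (fun i _ => p ^ i) N

end count

theorem stmt0 (p : ℕ) [Fact p.Prime] (N : ℕ) :
    (Set.ncard {I : Ideal (Matrix (Fin 2) (Fin 2) ℤ_[p]) | hasNorm p I N} =
      ∑ i ∈ Finset.range (N + 1), p ^ i) ∧
    (∀ I : Ideal (Matrix (Fin 2) (Fin 2) ℤ_[p]), hasNorm p I N →
      ∃ (n m : ℕ) (t : ℤ_[p]), n + m = N ∧ I = Ideal.span {genMat p n m t}) ∧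
    (∀ (n m n' m' : ℕ) (t t' : ℤ_[p]), n + m = N → n' + m' = N →
      (Ideal.span {genMat p n m t} = Ideal.span {genMat p n' m' t'} ↔
        n = n' ∧ m = m' ∧ (p : ℤ_[p]) ^ m ∣ (t - t'))) :=
  ⟨ncard_setOf_hasNorm N, fun _ => exists_eq_span_genMat_of_hasNorm,
    fun _ _ _ _ _ _ h h' => span_genMat_eq_span_genMat_iff (h.trans h'.symm)⟩
end

section
/- Let z be a primitive element of Mat_2(Z_p) (i.e., z ∉ p·Mat_2(Z_p)). Then for every integer N with 0 ≤ N ≤ v_p(det z), there is a unique left ideal of Mat_2(Z_p) of norm p^N containing z. -/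
open Matrix

/-- A matrix over `ℤ_p` is primitive if it is not in `p·Mat₂(ℤ_p)`. -/
def PrimitiveMat (p : ℕ) [Fact p.Prime] (g : Matrix (Fin 2) (Fin 2) ℤ_[p]) : Prop :=
  ∃ i j, ¬ (p : ℤ_[p]) ∣ g i j

/-!
The ideal in question is `R z + R p^N`, where `R = Mat₂(ℤ_p)`. A principal left ideal `R g` with
`v(det g) = N` contains `p^N`, because `adj(g) g = det g` and `det g` is `p^N` up to a unit; so if
it contains `z` it contains `R z + R p^N`. An inclusion `R g ⊆ R g'` of principal left ideals of
the same norm is an equality, since `g = a g'` forces `det a` to be a unit. Finally, a primitive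
`z` has a unit entry, hence a Smith form `z = u · diag(1, d) · v`, and `p^N ∣ d` because
`v(d) = v(det z) ≥ N`; then `R z + R p^N = R · diag(1, p^N) v`, which has norm `p^N`.
-/
namespace Matrix

variable {R : Type*} [CommRing R]

theorem smul_one_mem_span_singleton_of_det_dvd {n : Type*} [Fintype n] [DecidableEq n]
    {g : Matrix n n R} {x : R} (h : g.det ∣ x) : x • (1 : Matrix n n R) ∈ Ideal.span {g} := by
  obtain ⟨t, rfl⟩ := h
  refine Ideal.mem_span_singleton'.mpr ⟨t • g.adjugate, ?_⟩
  rw [smul_mul_assoc, adjugate_mul, smul_smul, mul_comm]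

theorem exists_eq_mul_mul_of_isUnit_apply_zero_zero {z : Matrix (Fin 2) (Fin 2) R}
    (h : IsUnit (z 0 0)) :
    ∃ u v : Matrix (Fin 2) (Fin 2) R, ∃ d : R,
      IsUnit u ∧ IsUnit v ∧ z = u * !![1, 0; 0, d] * v := by
  obtain ⟨a, ha⟩ := h
  refine ⟨!![↑a, 0; z 1 0, 1], !![1, ↑a⁻¹ * z 0 1; 0, 1], z 1 1 - z 1 0 * (↑a⁻¹ * z 0 1),
    ?_, ?_, ?_⟩
  · simp [isUnit_iff_isUnit_det, det_fin_two_of]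
  · simp [isUnit_iff_isUnit_det, det_fin_two_of]
  · ext i j
    fin_cases i <;> fin_cases j <;> simp [← ha]

theorem exists_eq_mul_mul_of_isUnit_apply {z : Matrix (Fin 2) (Fin 2) R} {i j : Fin 2}
    (h : IsUnit (z i j)) :
    ∃ u v : Matrix (Fin 2) (Fin 2) R, ∃ d : R,
      IsUnit u ∧ IsUnit v ∧ z = u * !![1, 0; 0, d] * v := by
  set σ : Matrix (Fin 2) (Fin 2) R := (Equiv.swap 0 i).permMatrix R
  set τ : Matrix (Fin 2) (Fin 2) R := (Equiv.swap 0 j).permMatrix R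
  have hσ : σ * σ = 1 := by simp [σ, ← permMatrix_mul]
  have hτ : τ * τ = 1 := by simp [τ, ← permMatrix_mul]
  have h00 : (σ * z * τ) 0 0 = z i j := by
    simp [σ, τ, PEquiv.toMatrix_toPEquiv_mul, PEquiv.mul_toMatrix_toPEquiv]
  obtain ⟨u, v, d, hu, hv, huv⟩ := exists_eq_mul_mul_of_isUnit_apply_zero_zero (h00 ▸ h)
  refine ⟨σ * u, v * τ, d, IsUnit.mul ⟨⟨σ, σ, hσ, hσ⟩, rfl⟩ hu,
    hv.mul ⟨⟨τ, τ, hτ, hτ⟩, rfl⟩, ?_⟩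
  calc z = (σ * σ) * z * (τ * τ) := by rw [hσ, hτ, one_mul, mul_one]
    _ = σ * (σ * z * τ) * τ := by simp only [mul_assoc]
    _ = _ := by rw [huv]; simp only [mul_assoc]

theorem span_insert_smul_one_eq_span_singleton {u v : Matrix (Fin 2) (Fin 2) R} {c d : R}
    (hu : IsUnit u) (hv : IsUnit v) (hcd : c ∣ d) :
    Ideal.span {u * !![1, 0; 0, d] * v, c • 1} = Ideal.span {!![1, 0; 0, c] * v} := by
  obtain ⟨e, rfl⟩ := hcd
  obtain ⟨u', hu'⟩ := hu.exists_left_inv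
  apply le_antisymm
  · rw [Ideal.span_le, Set.insert_subset_iff, Set.singleton_subset_iff]
    constructor
    · refine Ideal.mem_span_singleton'.mpr ⟨u * !![1, 0; 0, e], ?_⟩
      calc u * !![1, 0; 0, e] * (!![1, 0; 0, c] * v)
          = u * (!![1, 0; 0, e] * !![1, 0; 0, c]) * v := by simp only [mul_assoc]
        _ = _ := by rw [mul_fin_two]; simp [mul_comm]
    · refine smul_one_mem_span_singleton_of_det_dvd ?_
      rw [det_mul, det_fin_two_of, one_mul, mul_zero, sub_zero]
      exact ((isUnit_iff_isUnit_det v).mp hv).mul_right_dvd.mpr dvd_rfl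
  · have hz : !![1, 0; 0, 0] * u' * (u * !![1, 0; 0, c * e] * v) = !![1, 0; 0, 0] * v := by
      calc _ = !![1, 0; 0, 0] * (u' * u) * !![1, 0; 0, c * e] * v := by
            simp only [mul_assoc]
        _ = _ := by rw [hu', mul_one, mul_fin_two]; simp
    have hc : !![0, 0; 0, 1] * v * (c • 1) = (c • !![0, 0; 0, 1]) * v := by
      rw [Matrix.mul_smul, mul_one, smul_mul_assoc]
    have : !![1, 0; 0, c] * v =
        !![1, 0; 0, 0] * u' * (u * !![1, 0; 0, c * e] * v) + !![0, 0; 0, 1] * v * (c • 1) := by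
      rw [hz, hc, ← add_mul]
      congr 1
      ext i j
      fin_cases i <;> fin_cases j <;> simp
    rw [Ideal.span_singleton_le_iff_mem, this]
    exact add_mem (Ideal.mul_mem_left _ _ (Ideal.subset_span (by simp)))
      (Ideal.mul_mem_left _ _ (Ideal.subset_span (by simp)))

end Matrix

namespace PadicInt

variable {p : ℕ} [Fact p.Prime]

theorem pow_dvd_of_le_valuation {x : ℤ_[p]} {n : ℕ} (h : n ≤ x.valuation) :
    (p : ℤ_[p]) ^ n ∣ x := by
  rcases eq_or_ne x 0 with rfl | hx
  · exact dvd_zero _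
  · exact Ideal.mem_span_singleton.mp ((mem_span_pow_iff_le_valuation x hx n).mpr h)

theorem ne_zero_of_norm_eq_zpow {x : ℤ_[p]} {n : ℤ} (h : ‖x‖ = (p : ℝ) ^ n) : x ≠ 0 := by
  rintro rfl
  rw [norm_zero] at h
  exact (zpow_pos (by exact_mod_cast (Fact.out : p.Prime).pos) n).ne h

theorem dvd_p_pow_of_norm_eq {x : ℤ_[p]} {n : ℕ} (h : ‖x‖ = (p : ℝ) ^ (-n : ℤ)) :
    x ∣ (p : ℤ_[p]) ^ n := by
  have hx := ne_zero_of_norm_eq_zpow h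
  have hv : x.valuation = n := by
    rw [norm_eq_zpow_neg_valuation hx] at h
    have := zpow_right_injective₀ (by exact_mod_cast (Fact.out : p.Prime).pos)
      (by exact_mod_cast (Fact.out : p.Prime).one_lt.ne') h
    omega
  exact (Associated.symm ⟨unitCoeff hx, by rw [mul_comm, ← hv, ← unitCoeff_spec hx]⟩).dvd

theorem isUnit_of_norm_det_mul_eq {n : Type*} [Fintype n] [DecidableEq n]
    {a g : Matrix n n ℤ_[p]} (hg : g.det ≠ 0) (h : ‖(a * g).det‖ = ‖g.det‖) : IsUnit a := by
  rw [det_mul, norm_mul, mul_eq_right₀ (norm_ne_zero_iff.mpr hg)] at h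
  exact (isUnit_iff_isUnit_det a).mpr (isUnit_iff.mpr h)

theorem span_singleton_eq_of_mem_of_norm_det_eq {n : Type*} [Fintype n] [DecidableEq n]
    {g g' : Matrix n n ℤ_[p]} (hg' : g'.det ≠ 0) (hmem : g ∈ Ideal.span {g'})
    (h : ‖g.det‖ = ‖g'.det‖) : Ideal.span {g} = Ideal.span {g'} := by
  obtain ⟨a, rfl⟩ := Ideal.mem_span_singleton'.mp hmem
  exact Ideal.span_singleton_mul_left_unit (isUnit_of_norm_det_mul_eq hg' h) g'

end PadicInt

section

variable {p : ℕ} [Fact p.Prime]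

open PadicInt

theorem PrimitiveMat.exists_isUnit_apply {z : Matrix (Fin 2) (Fin 2) ℤ_[p]}
    (hz : PrimitiveMat p z) : ∃ i j, IsUnit (z i j) := by
  obtain ⟨i, j, h⟩ := hz
  exact ⟨i, j, by rwa [← norm_lt_one_iff_dvd, ← not_isUnit_iff, not_not] at h⟩

theorem hasNorm.smul_one_mem {I : Ideal (Matrix (Fin 2) (Fin 2) ℤ_[p])} {N : ℕ}
    (hI : hasNorm p I N) : (p : ℤ_[p]) ^ N • (1 : Matrix (Fin 2) (Fin 2) ℤ_[p]) ∈ I := by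
  obtain ⟨g, rfl, hg⟩ := hI
  exact smul_one_mem_span_singleton_of_det_dvd (dvd_p_pow_of_norm_eq hg)

theorem hasNorm.eq_of_le {I J : Ideal (Matrix (Fin 2) (Fin 2) ℤ_[p])} {N : ℕ}
    (hI : hasNorm p I N) (hJ : hasNorm p J N) (hIJ : I ≤ J) : I = J := by
  obtain ⟨g, rfl, hg⟩ := hI
  obtain ⟨g', rfl, hg'⟩ := hJ
  exact span_singleton_eq_of_mem_of_norm_det_eq (ne_zero_of_norm_eq_zpow hg')
    (hIJ (Ideal.mem_span_singleton_self g)) (hg.trans hg'.symm)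

end

theorem stmt4 (p : ℕ) [Fact p.Prime] (z : Matrix (Fin 2) (Fin 2) ℤ_[p])
    (hz : PrimitiveMat p z) (N : ℕ) (hN : (N : ℤ) ≤ z.det.valuation) :
    ∃! I : Ideal (Matrix (Fin 2) (Fin 2) ℤ_[p]), hasNorm p I N ∧ z ∈ I := by
  obtain ⟨i, j, hij⟩ := hz.exists_isUnit_apply
  obtain ⟨u, v, d, hu, hv, rfl⟩ := exists_eq_mul_mul_of_isUnit_apply hij
  have hdet_v : IsUnit v.det := (isUnit_iff_isUnit_det v).mp hv
  have hd : (p : ℤ_[p]) ^ N ∣ d := by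
    have := PadicInt.pow_dvd_of_le_valuation (x := (u * !![1, 0; 0, d] * v).det) (mod_cast hN)
    rwa [det_mul, det_mul, det_fin_two_of, hdet_v.dvd_mul_right,
      ((isUnit_iff_isUnit_det u).mp hu).dvd_mul_left, one_mul, mul_zero, sub_zero] at this
  have hJ : hasNorm p (Ideal.span {u * !![1, 0; 0, d] * v, (p : ℤ_[p]) ^ N • 1}) N := by
    refine ⟨_, span_insert_smul_one_eq_span_singleton hu hv hd, ?_⟩
    rw [det_mul, norm_mul, PadicInt.isUnit_iff.mp hdet_v, mul_one, det_fin_two_of]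
    simp
  refine ⟨_, ⟨hJ, Ideal.subset_span (Set.mem_insert _ _)⟩, fun I ⟨hI, hzI⟩ ↦ ?_⟩
  refine (hJ.eq_of_le hI ?_).symm
  exact Ideal.span_le.mpr (Set.insert_subset hzI (Set.singleton_subset_iff.mpr hI.smul_one_mem))
end

section
/- Let j, k, r, s be non-negative integers and let y, z be primitive elements of Mat_2(Z_p) with v_p(det y) ≥ r and v_p(det z) ≥ s. Write I_{y,N} for the unique left ideal of norm p^N containing y (for N ≤ v_p(det y)), and similarly I_{z,N}. Then p^j·I_{y,r} ⊆ p^k·I_{z,s} if and only if r ≥ s − j + k, s ≥ s − j + k (i.e., j ≥ k), and, when s − j + k ≥ 0, I_{y,s−j+k} = I_{z,s−j+k}. -/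
open Matrix

/-!
Let `M = Mat₂(ℤ_p)`. A primitive `g` with `‖det g‖ = p^(-N)` has elementary divisors `1, p^N`,
i.e. `g = u * diag(1, p^N) * v` with `u, v` invertible. Hence a left ideal of norm `p^N` containing
a primitive element is `M * diag(1, p^N) * v`, and `X` lies in it iff `p^N` divides the second
column of `X * v⁻¹`. Such an ideal is `M x + p^N M` for every primitive `x` in it, which is the
uniqueness of `I_{x,N}`.

Write `Iy = M * diag(1, p^r) * v`, `Iz = M * diag(1, p^s) * w` and `m = v * w⁻¹`. Since the
generator of `Iy` is primitive, `p^j Iy ⊆ p^k Iz` forces `k ≤ j` and then says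
`p^s ∣ p^(j-k) m₀₁` and `p^s ∣ p^(j-k+r) m₁₁`. As `m₀₁, m₁₁` are coprime, this means
`t := s - j + k ≤ r` and `p^t ∣ m₀₁`, and the latter says `M * diag(1, p^t) * v`, which is
`I_{y,t}`, is contained in `M * diag(1, p^t) * w = I_{z,t}`.
-/

theorem pow_dvd_pow_mul_iff {M : Type*} [CommMonoidWithZero M] [IsCancelMulZero M] {π : M}
    (hπ : π ≠ 0) {a b : ℕ} {x : M} : π ^ a ∣ π ^ b * x ↔ π ^ (a - b) ∣ x := by
  rcases le_total b a with hba | hab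
  · obtain ⟨c, rfl⟩ := Nat.exists_eq_add_of_le hba
    rw [pow_add, Nat.add_sub_cancel_left, mul_dvd_mul_iff_left (pow_ne_zero _ hπ)]
  · rw [Nat.sub_eq_zero_of_le hab, pow_zero]
    exact iff_of_true ((pow_dvd_pow π hab).mul_right x) (one_dvd x)

theorem pow_dvd_and_pow_sub_dvd_iff {R : Type*} [CommRing R] {π a b : R} (hπ : ¬IsUnit π)
    (hab : IsCoprime a b) (n r : ℕ) : π ^ n ∣ a ∧ π ^ (n - r) ∣ b ↔ n ≤ r ∧ π ^ n ∣ a := by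
  constructor
  · rintro ⟨ha, hb⟩
    refine ⟨?_, ha⟩
    by_contra hnr
    exact hπ (hab.isUnit_of_dvd' ((dvd_pow_self π (by omega)).trans ha)
      ((dvd_pow_self π (by omega)).trans hb))
  · rintro ⟨hnr, ha⟩
    rw [Nat.sub_eq_zero_of_le hnr, pow_zero]
    exact ⟨ha, one_dvd b⟩

theorem Ideal.mem_span_singleton_mul_units_iff {A : Type*} [Ring A] (g x : A) (u : Aˣ) :
    x ∈ Ideal.span {g * ↑u} ↔ x * ↑u⁻¹ ∈ Ideal.span {g} := by
  simp only [Ideal.mem_span_singleton', ← mul_assoc]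
  exact ⟨fun ⟨c, hc⟩ => ⟨c, by rw [← hc, Units.mul_inv_cancel_right]⟩,
    fun ⟨c, hc⟩ => ⟨c, by rw [hc, Units.inv_mul_cancel_right]⟩⟩

namespace Matrix

variable {R : Type*} [CommRing R]

theorem mem_span_diagonal_iff (a : R) (X : Matrix (Fin 2) (Fin 2) R) :
    X ∈ Ideal.span {diagonal ![1, a]} ↔ ∀ i, a ∣ X i 1 := by
  rw [Ideal.mem_span_singleton']
  constructor
  · rintro ⟨c, rfl⟩ i
    exact ⟨c i 1, by simp [mul_diagonal, mul_comm]⟩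
  · intro h
    choose b hb using h
    refine ⟨!![X 0 0, b 0; X 1 0, b 1], ?_⟩
    ext i j
    fin_cases i <;> fin_cases j <;> simp [mul_diagonal, hb, mul_comm]

theorem isCoprime_apply_one_of_isUnit {m : Matrix (Fin 2) (Fin 2) R} (hm : IsUnit m) :
    IsCoprime (m 0 1) (m 1 1) := by
  obtain ⟨u, hu⟩ := (isUnit_iff_isUnit_det m).mp hm
  refine ⟨-(m 1 0 * ↑u⁻¹), m 0 0 * ↑u⁻¹, ?_⟩
  rw [det_fin_two] at hu
  linear_combination (↑u⁻¹ : R) * hu.symm + u.inv_mul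

theorem exists_eq_units_mul_diagonal_mul_of_isUnit {g : Matrix (Fin 2) (Fin 2) R}
    (h : IsUnit (g 0 0)) : ∃ (u v : (Matrix (Fin 2) (Fin 2) R)ˣ) (e : R),
      g = u.val * diagonal ![1, e] * v.val := by
  obtain ⟨a, ha⟩ := h
  have hu : IsUnit !![g 0 0, 0; g 1 0, 1] := by
    simp [isUnit_iff_isUnit_det, det_fin_two_of, ← ha]
  have hv : IsUnit !![1, ↑a⁻¹ * g 0 1; 0, 1] := by
    simp [isUnit_iff_isUnit_det, det_fin_two_of]
  refine ⟨hu.unit, hv.unit, g 1 1 - g 1 0 * ↑a⁻¹ * g 0 1, ?_⟩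
  have hainv : g 0 0 * ↑a⁻¹ = 1 := by rw [← ha, Units.mul_inv]
  ext i j
  fin_cases i <;> fin_cases j <;>
    simp [mul_apply, Fin.sum_univ_two, vecMul, dotProduct, IsUnit.unit_spec]
  · linear_combination (-g 0 1) * hainv
  · ring

theorem exists_units_isUnit_mul_mul_apply_zero_zero {g : Matrix (Fin 2) (Fin 2) R}
    (h : ∃ i j, IsUnit (g i j)) : ∃ P Q : (Matrix (Fin 2) (Fin 2) R)ˣ,
      IsUnit ((P.val * g * Q.val) 0 0) := by
  obtain ⟨i, j, hij⟩ := h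
  let σ : (Matrix (Fin 2) (Fin 2) R)ˣ :=
    ⟨!![0, 1; 1, 0], !![0, 1; 1, 0], by simp [one_fin_two], by simp [one_fin_two]⟩
  refine ⟨if i = 0 then 1 else σ, if j = 0 then 1 else σ, ?_⟩
  fin_cases i <;> fin_cases j <;>
    simpa [σ, mul_apply, Fin.sum_univ_two, vecMul, dotProduct] using hij

theorem exists_eq_units_mul_diagonal_mul {g : Matrix (Fin 2) (Fin 2) R}
    (h : ∃ i j, IsUnit (g i j)) : ∃ (u v : (Matrix (Fin 2) (Fin 2) R)ˣ) (e : R),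
      g = u.val * diagonal ![1, e] * v.val := by
  obtain ⟨P, Q, hPQ⟩ := exists_units_isUnit_mul_mul_apply_zero_zero h
  obtain ⟨u, v, e, huv⟩ := exists_eq_units_mul_diagonal_mul_of_isUnit hPQ
  refine ⟨P⁻¹ * u, v * Q⁻¹, e, ?_⟩
  calc g = P⁻¹.val * (P.val * g * Q.val) * Q⁻¹.val := by simp [mul_assoc]
    _ = _ := by simp [huv, mul_assoc]

end Matrix

namespace PadicInt

variable {p : ℕ} [Fact p.Prime]

theorem isUnit_of_not_dvd {x : ℤ_[p]} (h : ¬(p : ℤ_[p]) ∣ x) : IsUnit x :=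
  isUnit_iff.mpr <| (norm_le_one x).eq_of_not_lt (mt (norm_lt_one_iff_dvd x).mp h)

theorem isCoprime_of_not_dvd {a b : ℤ_[p]} (h : ¬((p : ℤ_[p]) ∣ a ∧ (p : ℤ_[p]) ∣ b)) :
    IsCoprime a b := by
  by_cases ha : (p : ℤ_[p]) ∣ a
  · exact isCoprime_one_right.of_isCoprime_of_dvd_right
      (isUnit_of_not_dvd fun hb => h ⟨ha, hb⟩).dvd
  · exact isCoprime_one_left.of_isCoprime_of_dvd_left (isUnit_of_not_dvd ha).dvd

theorem exists_isUnit_mul_pow_eq_of_norm_eq {e : ℤ_[p]} {N : ℕ}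
    (he : ‖e‖ = (p : ℝ) ^ (-(N : ℤ))) : ∃ w : ℤ_[p], IsUnit w ∧ e = w * (p : ℤ_[p]) ^ N := by
  obtain ⟨w, rfl⟩ : (p : ℤ_[p]) ^ N ∣ e := by
    rw [← Ideal.mem_span_singleton, ← norm_le_pow_iff_mem_span_pow, he]
  refine ⟨w, isUnit_iff.mpr ?_, mul_comm _ _⟩
  rw [norm_mul, norm_p_pow] at he
  exact (mul_eq_left₀ (zpow_pos (by exact_mod_cast (Fact.out : p.Prime).pos) _).ne').mp he

theorem norm_det_units (u : (Matrix (Fin 2) (Fin 2) ℤ_[p])ˣ) : ‖u.val.det‖ = 1 :=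
  isUnit_iff.mp (isUnits_det_units u)

end PadicInt

section

variable {p : ℕ} [Fact p.Prime]

theorem not_primitiveMat_iff {g : Matrix (Fin 2) (Fin 2) ℤ_[p]} :
    ¬PrimitiveMat p g ↔ ∃ h, g = (p : ℤ_[p]) • h := by
  simp only [PrimitiveMat, not_exists, not_not]
  constructor
  · intro hg
    choose h hh using hg
    exact ⟨Matrix.of h, by ext i j; simp [hh]⟩
  · rintro ⟨h, rfl⟩ i j
    exact ⟨h i j, rfl⟩

namespace PrimitiveMat

theorem of_mul_left {a g : Matrix (Fin 2) (Fin 2) ℤ_[p]}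
    (h : PrimitiveMat p (a * g)) : PrimitiveMat p g := by
  by_contra hg
  obtain ⟨g', rfl⟩ := not_primitiveMat_iff.mp hg
  exact not_primitiveMat_iff.mpr ⟨a * g', mul_smul_comm _ _ _⟩ h

theorem of_mul_right {a g : Matrix (Fin 2) (Fin 2) ℤ_[p]}
    (h : PrimitiveMat p (g * a)) : PrimitiveMat p g := by
  by_contra hg
  obtain ⟨g', rfl⟩ := not_primitiveMat_iff.mp hg
  exact not_primitiveMat_iff.mpr ⟨g' * a, smul_mul_assoc _ _ _⟩ h

theorem of_mem_span_singleton {x g : Matrix (Fin 2) (Fin 2) ℤ_[p]}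
    (hx : PrimitiveMat p x) (h : x ∈ Ideal.span {g}) : PrimitiveMat p g := by
  obtain ⟨a, rfl⟩ := Ideal.mem_span_singleton'.mp h
  exact of_mul_left hx

end PrimitiveMat

theorem forall_mem_span_singleton_smul_iff {g : Matrix (Fin 2) (Fin 2) ℤ_[p]}
    (hg : PrimitiveMat p g) (I : Ideal (Matrix (Fin 2) (Fin 2) ℤ_[p])) (j k : ℕ) :
    (∀ A ∈ Ideal.span {g}, ∃ B ∈ I, (p : ℤ_[p]) ^ j • A = (p : ℤ_[p]) ^ k • B) ↔
      k ≤ j ∧ (p : ℤ_[p]) ^ (j - k) • g ∈ I := by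
  have hp : (p : ℤ_[p]) ≠ 0 := PadicInt.prime_p.ne_zero
  constructor
  · intro h
    obtain ⟨B, hB, hgB⟩ := h g (Ideal.mem_span_singleton_self g)
    have hkj : k ≤ j := by
      by_contra hjk
      refine not_primitiveMat_iff.mpr ⟨(p : ℤ_[p]) ^ (k - j - 1) • B, ?_⟩ hg
      refine smul_right_injective _ (pow_ne_zero j hp) ?_
      simp only [smul_smul, ← pow_succ', ← pow_add]
      rwa [show j + (k - j - 1 + 1) = k by omega]
    refine ⟨hkj, ?_⟩
    convert hB using 1
    refine smul_right_injective _ (pow_ne_zero k hp) ?_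
    simp only [smul_smul, ← pow_add]
    rwa [Nat.add_sub_cancel' hkj]
  · rintro ⟨hkj, hgI⟩ A hA
    obtain ⟨a, rfl⟩ := Ideal.mem_span_singleton'.mp hA
    refine ⟨a * ((p : ℤ_[p]) ^ (j - k) • g), I.mul_mem_left a hgI, ?_⟩
    rw [mul_smul_comm, smul_smul, ← pow_add, Nat.add_sub_cancel' hkj]

noncomputable def diagPow (p : ℕ) [Fact p.Prime] (N : ℕ) : Matrix (Fin 2) (Fin 2) ℤ_[p] :=
  diagonal ![1, (p : ℤ_[p]) ^ N]

@[simp]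
theorem diagPow_zero : diagPow p 0 = 1 := by
  ext i j
  fin_cases i <;> fin_cases j <;> simp [diagPow]

theorem exists_eq_units_mul_diagPow_mul {g : Matrix (Fin 2) (Fin 2) ℤ_[p]}
    (hg : PrimitiveMat p g) {N : ℕ} (hdet : ‖g.det‖ = (p : ℝ) ^ (-(N : ℤ))) :
    ∃ u v : (Matrix (Fin 2) (Fin 2) ℤ_[p])ˣ, g = u.val * diagPow p N * v.val := by
  obtain ⟨i, j, hij⟩ := hg
  obtain ⟨u, v, e, rfl⟩ :=
    exists_eq_units_mul_diagonal_mul ⟨i, j, PadicInt.isUnit_of_not_dvd hij⟩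
  have he : ‖e‖ = (p : ℝ) ^ (-(N : ℤ)) := by
    simpa [det_mul, det_diagonal, PadicInt.norm_det_units] using hdet
  obtain ⟨w, hw, rfl⟩ := PadicInt.exists_isUnit_mul_pow_eq_of_norm_eq he
  have hW : IsUnit (diagonal ![1, w]) := by
    simpa [isUnit_iff_isUnit_det, det_diagonal] using hw
  refine ⟨u * hW.unit, v, ?_⟩
  rw [Units.val_mul, IsUnit.unit_spec, diagPow, mul_assoc u.val (diagonal ![1, w]),
    diagonal_mul_diagonal]
  congr
  ext i
  fin_cases i <;> simp

theorem exists_eq_span_diagPow_mul_of_hasNorm {I : Ideal (Matrix (Fin 2) (Fin 2) ℤ_[p])} {N : ℕ}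
    {x : Matrix (Fin 2) (Fin 2) ℤ_[p]} (hI : hasNorm p I N) (hx : PrimitiveMat p x)
    (hxI : x ∈ I) :
    ∃ v : (Matrix (Fin 2) (Fin 2) ℤ_[p])ˣ, I = Ideal.span {diagPow p N * v.val} := by
  obtain ⟨g, rfl, hg⟩ := hI
  obtain ⟨u, v, rfl⟩ := exists_eq_units_mul_diagPow_mul (hx.of_mem_span_singleton hxI) hg
  exact ⟨v, by rw [mul_assoc, Ideal.span_singleton_mul_left_unit u.isUnit]⟩

theorem hasNorm_span_diagPow_mul (N : ℕ) (v : (Matrix (Fin 2) (Fin 2) ℤ_[p])ˣ) :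
    hasNorm p (Ideal.span {diagPow p N * v.val}) N :=
  ⟨_, rfl, by simp [diagPow, det_diagonal, PadicInt.norm_det_units]⟩

theorem smul_diagPow_mul_mem_span_iff (d r s : ℕ) (v w : (Matrix (Fin 2) (Fin 2) ℤ_[p])ˣ) :
    (p : ℤ_[p]) ^ d • (diagPow p r * v.val) ∈ Ideal.span {diagPow p s * w.val} ↔
      (p : ℤ_[p]) ^ (s - d) ∣ (v * w⁻¹).val 0 1 ∧
        (p : ℤ_[p]) ^ (s - d - r) ∣ (v * w⁻¹).val 1 1 := by
  rw [Ideal.mem_span_singleton_mul_units_iff, smul_mul_assoc, mul_assoc, ← Units.val_mul]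
  simp only [diagPow, mem_span_diagonal_iff, Fin.forall_fin_two, Matrix.smul_apply, diagonal_mul,
    smul_eq_mul, cons_val_zero, cons_val_one, mul_one, ← mul_assoc, ← pow_add,
    pow_dvd_pow_mul_iff PadicInt.prime_p.ne_zero, Nat.sub_sub]

theorem pow_smul_mem_span_diagPow_mul (N : ℕ) (X : Matrix (Fin 2) (Fin 2) ℤ_[p])
    (v : (Matrix (Fin 2) (Fin 2) ℤ_[p])ˣ) :
    (p : ℤ_[p]) ^ N • X ∈ Ideal.span {diagPow p N * v.val} := by
  rw [Ideal.mem_span_singleton_mul_units_iff, diagPow, mem_span_diagonal_iff]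
  intro i
  rw [smul_mul_assoc, Matrix.smul_apply, smul_eq_mul]
  exact dvd_mul_right _ _

theorem span_diagPow_mul_mono {t r : ℕ} (h : t ≤ r) (v : (Matrix (Fin 2) (Fin 2) ℤ_[p])ˣ) :
    Ideal.span {diagPow p r * v.val} ≤ Ideal.span {diagPow p t * v.val} := by
  rw [Ideal.span_singleton_le_iff_mem]
  simpa [Nat.sub_eq_zero_of_le h] using smul_diagPow_mul_mem_span_iff 0 r t v v

theorem span_diagPow_mul_le_iff (t : ℕ) (v w : (Matrix (Fin 2) (Fin 2) ℤ_[p])ˣ) :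
    Ideal.span {diagPow p t * v.val} ≤ Ideal.span {diagPow p t * w.val} ↔
      (p : ℤ_[p]) ^ t ∣ (v * w⁻¹).val 0 1 := by
  simpa using smul_diagPow_mul_mem_span_iff 0 t t v w

theorem isCoprime_apply_zero_of_primitiveMat_mul_diagPow {c : Matrix (Fin 2) (Fin 2) ℤ_[p]}
    {N : ℕ} (hN : N ≠ 0) (h : PrimitiveMat p (c * diagPow p N)) :
    IsCoprime (c 0 0) (c 1 0) := by
  refine PadicInt.isCoprime_of_not_dvd fun ⟨h0, h1⟩ => ?_
  obtain ⟨i, j, hij⟩ := h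
  have hpN : (p : ℤ_[p]) ∣ (p : ℤ_[p]) ^ N := dvd_pow_self _ hN
  fin_cases i <;> fin_cases j <;> simp [diagPow, mul_diagonal] at hij
  exacts [hij h0, hij (dvd_mul_of_dvd_right hpN _), hij h1, hij (dvd_mul_of_dvd_right hpN _)]

theorem span_diagPow_mul_eq_sup {N : ℕ} {v : (Matrix (Fin 2) (Fin 2) ℤ_[p])ˣ}
    {x : Matrix (Fin 2) (Fin 2) ℤ_[p]} (hx : PrimitiveMat p x)
    (hxI : x ∈ Ideal.span {diagPow p N * v.val}) :
    Ideal.span {diagPow p N * v.val} = Ideal.span {x} ⊔ Ideal.span {(p : ℤ_[p]) ^ N • 1} := by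
  refine le_antisymm ?_ (sup_le ((Ideal.span_singleton_le_iff_mem _).mpr hxI)
    ((Ideal.span_singleton_le_iff_mem _).mpr (pow_smul_mem_span_diagPow_mul N 1 v)))
  rw [Ideal.span_singleton_le_iff_mem]
  obtain rfl | hN := eq_or_ne N 0
  · exact Ideal.mem_sup_right (Ideal.mem_span_singleton'.mpr ⟨v.val, by simp⟩)
  obtain ⟨c, hc⟩ := Ideal.mem_span_singleton'.mp hxI
  obtain ⟨a, b, hab⟩ := isCoprime_apply_zero_of_primitiveMat_mul_diagPow hN
    (PrimitiveMat.of_mul_right (a := v.val) (by rwa [mul_assoc, hc]))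
  -- `!![a, b; 0, 0]` sends the first column of `c`, which is primitive, to `(1, 0)`.
  set Y : Matrix (Fin 2) (Fin 2) ℤ_[p] := !![0, -(a * c 0 1 + b * c 1 1); 0, 1]
  have hdiag : diagPow p N = !![a, b; 0, 0] * c * diagPow p N + (p : ℤ_[p]) ^ N • Y := by
    ext i j
    fin_cases i <;> fin_cases j <;>
      simp [diagPow, Y, mul_apply, Fin.sum_univ_two, vecMul, dotProduct]
    · linear_combination -hab
    · ring
  have hdecomp : diagPow p N * v.val =
      !![a, b; 0, 0] * x + (Y * v.val) * ((p : ℤ_[p]) ^ N • 1) := by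
    conv_lhs => rw [hdiag]
    simp only [← hc, add_mul, mul_assoc, mul_smul_comm, mul_one, smul_mul_assoc]
  rw [hdecomp]
  exact Ideal.add_mem _
    (Ideal.mem_sup_left (Ideal.mul_mem_left _ _ (Ideal.mem_span_singleton_self _)))
    (Ideal.mem_sup_right (Ideal.mul_mem_left _ _ (Ideal.mem_span_singleton_self _)))

theorem exists_hasNorm_mem_and_mem_iff {y z : Matrix (Fin 2) (Fin 2) ℤ_[p]} {r s t : ℕ}
    {v w : (Matrix (Fin 2) (Fin 2) ℤ_[p])ˣ}
    (hy : PrimitiveMat p y) (hyI : y ∈ Ideal.span {diagPow p r * v.val})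
    (hz : PrimitiveMat p z) (hzI : z ∈ Ideal.span {diagPow p s * w.val})
    (htr : t ≤ r) (hts : t ≤ s) :
    (∃ J, hasNorm p J t ∧ y ∈ J ∧ z ∈ J) ↔ (p : ℤ_[p]) ^ t ∣ (v * w⁻¹).val 0 1 := by
  have hyt := span_diagPow_mul_mono htr v hyI
  have hzt := span_diagPow_mul_mono hts w hzI
  rw [← span_diagPow_mul_le_iff]
  constructor
  · rintro ⟨J, hJ, hyJ, hzJ⟩
    obtain ⟨u, rfl⟩ := exists_eq_span_diagPow_mul_of_hasNorm hJ hy hyJ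
    rw [span_diagPow_mul_eq_sup hy hyt, ← span_diagPow_mul_eq_sup hy hyJ,
      span_diagPow_mul_eq_sup hz hzJ, ← span_diagPow_mul_eq_sup hz hzt]
  · intro hle
    exact ⟨_, hasNorm_span_diagPow_mul t w, hle hyt, hzt⟩

end

/-- `Iy` and `Iz` are `I_{y,r}` and `I_{z,s}`; `I_{y,t} = I_{z,t}` is expressed as the existence
of an ideal of norm `p^t` containing both `y` and `z`. -/
theorem stmt5_general (p : ℕ) [Fact p.Prime] (j k r s : ℕ)
    (y z : Matrix (Fin 2) (Fin 2) ℤ_[p])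
    (hy : PrimitiveMat p y) (hz : PrimitiveMat p z)
    (Iy Iz : Ideal (Matrix (Fin 2) (Fin 2) ℤ_[p]))
    (hIy : hasNorm p Iy r ∧ y ∈ Iy) (hIz : hasNorm p Iz s ∧ z ∈ Iz) :
    (∀ A ∈ Iy, ∃ B ∈ Iz, ((p : ℤ_[p]) ^ j) • A = ((p : ℤ_[p]) ^ k) • B) ↔
      ((s : ℤ) - j + k ≤ r ∧ k ≤ j ∧
        (0 ≤ (s : ℤ) - j + k →
          ∃ J : Ideal (Matrix (Fin 2) (Fin 2) ℤ_[p]),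
            hasNorm p J ((s : ℤ) - j + k).toNat ∧ y ∈ J ∧ z ∈ J)) := by
  obtain ⟨hIyN, hyIy⟩ := hIy
  obtain ⟨hIzN, hzIz⟩ := hIz
  obtain ⟨v, rfl⟩ := exists_eq_span_diagPow_mul_of_hasNorm hIyN hy hyIy
  obtain ⟨w, rfl⟩ := exists_eq_span_diagPow_mul_of_hasNorm hIzN hz hzIz
  rw [forall_mem_span_singleton_smul_iff (hy.of_mem_span_singleton hyIy),
    smul_diagPow_mul_mem_span_iff, pow_dvd_and_pow_sub_dvd_iff PadicInt.prime_p.not_isUnit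
      (isCoprime_apply_one_of_isUnit (v * w⁻¹).isUnit)]
  have hcommon (hr : s - (j - k) ≤ r) :=
    exists_hasNorm_mem_and_mem_iff hy hyIy hz hzIz hr (Nat.sub_le s (j - k))
  have ht (hkj : k ≤ j) : ((s : ℤ) - j + k).toNat = s - (j - k) := by omega
  constructor
  · rintro ⟨hkj, hr, hdvd⟩
    refine ⟨by omega, hkj, fun _ => ?_⟩
    rw [ht hkj]
    exact (hcommon hr).mpr hdvd
  · rintro ⟨hr, hkj, hJ⟩
    refine ⟨hkj, by omega, ?_⟩
    rcases le_or_gt (j - k) s with hs | hs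
    · rw [← hcommon (by omega), ← ht hkj]
      exact hJ (by omega)
    · rw [Nat.sub_eq_zero_of_le hs.le, pow_zero]
      exact one_dvd _

/-- `Iy` plays the role of `I_{y,r}`, the unique left ideal of norm `p^r` containing the
primitive element `y`, and `Iz` that of `I_{z,s}`.  The containment
`p^j·I_{y,r} ⊆ p^k·I_{z,s}` holds iff `r, s ≥ s − j + k` and (when `s − j + k ≥ 0`)
`I_{y,s−j+k} = I_{z,s−j+k}` — the latter expressed as the existence of a common ideal of
norm `p^{s−j+k}` containing both `y` and `z`. -/
theorem stmt5 (p : ℕ) [Fact p.Prime] (j k r s : ℕ)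
    (y z : Matrix (Fin 2) (Fin 2) ℤ_[p])
    (hy : PrimitiveMat p y) (hz : PrimitiveMat p z)
    (hyr : (r : ℤ) ≤ y.det.valuation) (hzs : (s : ℤ) ≤ z.det.valuation)
    (Iy Iz : Ideal (Matrix (Fin 2) (Fin 2) ℤ_[p]))
    (hIy : hasNorm p Iy r ∧ y ∈ Iy) (hIz : hasNorm p Iz s ∧ z ∈ Iz) :
    (∀ A ∈ Iy, ∃ B ∈ Iz, ((p : ℤ_[p]) ^ j) • A = ((p : ℤ_[p]) ^ k) • B) ↔
      ((s : ℤ) - j + k ≤ r ∧ k ≤ j ∧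
        (0 ≤ (s : ℤ) - j + k →
          ∃ J : Ideal (Matrix (Fin 2) (Fin 2) ℤ_[p]),
            hasNorm p J ((s : ℤ) - j + k).toNat ∧ y ∈ J ∧ z ∈ J)) :=
  stmt5_general p j k r s y z hy hz Iy Iz hIy hIz
end

section
/- Let B be a quaternion algebra over Q with standard involution γ ↦ γ^∨, reduced trace Tr and reduced norm Nrd. Let x, u ∈ B and suppose δ is a nonzero integer dividing Tr(u), Nrd(u), and Tr(x u^∨) + γ·Nrd(u)/δ for some integer γ. Set w := x + γ·u/δ. Then Tr(w) and Nrd(w) are rational integers (w is integral) whenever x and u are integral. -/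
open Quaternion

/-!
Writing `a = γ/δ`, trace and norm of `w = x + a u` expand as
`Tr w = Tr x + a Tr u` and `Nrd w = Nrd x + a Tr(x u^∨) + a² Nrd u`.
The first is `Tr x + γ (Tr u / δ)`, and the last two terms of the second combine to
`γ (Tr(x u^∨) + γ Nrd u / δ) / δ`; all quotients are integers by the divisibility hypotheses.
-/

section StarAlgebra

variable {R A : Type*} [CommSemiring R] [StarRing R] [TrivialStar R]
  [Semiring A] [StarRing A] [Algebra R A] [StarModule R A]

theorem add_smul_add_star_add_smul (x u : A) (a : R) :
    (x + a • u) + star (x + a • u) = (x + star x) + a • (u + star u) := by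
  rw [star_add, StarModule.star_smul, star_trivial a, smul_add]
  abel

theorem add_smul_mul_star_add_smul (x u : A) (a : R) :
    (x + a • u) * star (x + a • u) =
      x * star x + a • (x * star u + u * star x) + a ^ 2 • (u * star u) := by
  rw [star_add, StarModule.star_smul, star_trivial a]
  simp only [mul_add, add_mul, smul_mul_assoc, mul_smul_comm, smul_smul, smul_add, sq]
  abel

end StarAlgebra

theorem Int.cast_add_mul_ediv {δ t : ℤ} (s γ : ℤ) (hδ : δ ≠ 0) (ht : δ ∣ t) :
    ((s + γ * (t / δ) : ℤ) : ℚ) = s + (γ / δ : ℚ) * t := by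
  rw [Int.cast_add, Int.cast_mul, Int.cast_div ht (Int.cast_ne_zero.mpr hδ)]
  ring

theorem Int.cast_add_mul_ediv_add_mul_ediv {δ m N : ℤ} (n γ : ℤ) (hδ : δ ≠ 0) (hN : δ ∣ N)
    (hmN : δ ∣ m + γ * (N / δ)) :
    ((n + γ * ((m + γ * (N / δ)) / δ) : ℤ) : ℚ) =
      n + (γ / δ : ℚ) * m + (γ / δ : ℚ) ^ 2 * N := by
  rw [Int.cast_add_mul_ediv n γ hδ hmN, Int.cast_add, Int.cast_mul,
    Int.cast_div hN (Int.cast_ne_zero.mpr hδ)]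
  ring

/-- In a quaternion algebra `B = ℍ[ℚ, c₁, c₂]` with standard involution `star`,
reduced trace `Tr(v) = v + star v` and reduced norm `Nrd(v) = v * star v`:
if `x, u` are integral (their reduced traces and norms are rational integers),
`δ ≠ 0` divides `Tr(u)`, `Nrd(u)` and `Tr(x u^∨) + γ·Nrd(u)/δ`, then
`w := x + (γ/δ)·u` is integral, i.e. `Tr(w), Nrd(w) ∈ ℤ`. -/
theorem stmt6 (c₁ c₂ : ℚ) (x u : ℍ[ℚ, c₁, c₂]) (tx nx tu nu txu : ℤ)
    (htx : ((tx : ℚ) : ℍ[ℚ, c₁, c₂]) = x + star x)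
    (hnx : ((nx : ℚ) : ℍ[ℚ, c₁, c₂]) = x * star x)
    (htu : ((tu : ℚ) : ℍ[ℚ, c₁, c₂]) = u + star u)
    (hnu : ((nu : ℚ) : ℍ[ℚ, c₁, c₂]) = u * star u)
    (htxu : ((txu : ℚ) : ℍ[ℚ, c₁, c₂]) = x * star u + u * star x)
    (δ γ : ℤ) (hδ : δ ≠ 0)
    (hdtu : δ ∣ tu) (hdnu : δ ∣ nu) (hdmix : δ ∣ (txu + γ * (nu / δ))) :
    ∃ tw nw : ℤ,
      ((tw : ℚ) : ℍ[ℚ, c₁, c₂]) =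
        (x + ((γ : ℚ) / (δ : ℚ)) • u) + star (x + ((γ : ℚ) / (δ : ℚ)) • u) ∧
      ((nw : ℚ) : ℍ[ℚ, c₁, c₂]) =
        (x + ((γ : ℚ) / (δ : ℚ)) • u) * star (x + ((γ : ℚ) / (δ : ℚ)) • u) := by
  refine ⟨tx + γ * (tu / δ), nx + γ * ((txu + γ * (nu / δ)) / δ), ?_, ?_⟩
  · rw [add_smul_add_star_add_smul, ← htx, ← htu, Int.cast_add_mul_ediv tx γ hδ hdtu,
      QuaternionAlgebra.coe_add, QuaternionAlgebra.smul_coe]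
  · rw [add_smul_mul_star_add_smul, ← hnx, ← htxu, ← hnu,
      Int.cast_add_mul_ediv_add_mul_ediv nx γ hδ hdnu hdmix, QuaternionAlgebra.coe_add,
      QuaternionAlgebra.coe_add, QuaternionAlgebra.smul_coe, QuaternionAlgebra.smul_coe]
end

section
/- Let B be a definite quaternion algebra over Q (ramified at ∞) and let x, u be elements of an order R in B. Then the quantity (Disc(x)·Disc(u) − (Tr(x)·Tr(u) − 2·Tr(x u^∨))^2)/4 is a non-negative integer, where Disc(v) := Tr(v)^2 − 4·Nrd(v). -/
/-!
Put `w = 2 x u^∨ - Tr(u) x + Tr(x) u`. In every quaternion algebra `Tr(w) = 2 Tr(x u^∨)` and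
`Disc(w) = (Tr(x) Tr(u) - 2 Tr(x u^∨))² - Disc(x) Disc(u)`, so the quantity in question is
`-Disc(w)/4 = Nrd(w) - Tr(x u^∨)²`. It is an integer because `w` lies in the order, and it is
non-negative because `-Disc(v) = Nrd(v - v^∨)` and the norm of a definite algebra is non-negative.
-/

open Quaternion

namespace QuaternionAlgebra

variable {S : Type*} [CommRing S] {c₁ c₂ c₃ : S}

def trd (v : ℍ[S,c₁,c₂,c₃]) : S := (v + star v).re

def nrd (v : ℍ[S,c₁,c₂,c₃]) : S := (v * star v).re

def disc (v : ℍ[S,c₁,c₂,c₃]) : S := trd v ^ 2 - 4 * nrd v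

theorem self_add_star_eq_coe_trd (v : ℍ[S,c₁,c₂,c₃]) : v + star v = ↑(trd v) := by
  rw [trd, self_add_star', re_coe]

theorem self_mul_star_eq_coe_nrd (v : ℍ[S,c₁,c₂,c₃]) : v * star v = ↑(nrd v) :=
  mul_star_eq_coe v

theorem trd_eq_of_coe_eq {v : ℍ[S,c₁,c₂,c₃]} {t : S} (h : (t : ℍ[S,c₁,c₂,c₃]) = v + star v) :
    t = trd v :=
  coe_injective (h.trans (self_add_star_eq_coe_trd v))

theorem nrd_eq_of_coe_eq {v : ℍ[S,c₁,c₂,c₃]} {n : S} (h : (n : ℍ[S,c₁,c₂,c₃]) = v * star v) :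
    n = nrd v :=
  coe_injective (h.trans (self_mul_star_eq_coe_nrd v))

theorem nrd_sub_star (v : ℍ[S,c₁,c₂,c₃]) : nrd (v - star v) = -disc v := by
  simp only [disc, trd, nrd, re_add, re_sub, re_mul, imI_sub, imJ_sub, imK_sub, re_star, imI_star,
    imJ_star, imK_star, star_sub, star_star]
  ring

theorem disc_nonpos_of_forall_nrd_nonneg [PartialOrder S] [IsOrderedRing S]
    (h : ∀ v : ℍ[S,c₁,c₂,c₃], 0 ≤ nrd v) (v : ℍ[S,c₁,c₂,c₃]) : disc v ≤ 0 :=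
  neg_nonneg.mp (nrd_sub_star v ▸ h (v - star v))

def discWitness (x u : ℍ[S,c₁,c₂,c₃]) : ℍ[S,c₁,c₂,c₃] :=
  2 * x * star u - ↑(trd u) * x + ↑(trd x) * u

theorem trd_discWitness (x u : ℍ[S,c₁,c₂,c₃]) :
    trd (discWitness x u) = 2 * trd (x * star u) := by
  simp only [discWitness, trd, re_add, re_sub, re_mul, imI_mul, imJ_mul, imK_mul, re_star,
    imI_star, imJ_star, imK_star, star_sub, star_add, star_mul, star_star, star_coe, re_coe,
    imI_coe, imJ_coe, imK_coe, re_ofNat, imI_ofNat, imJ_ofNat, imK_ofNat, star_ofNat]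
  ring

theorem disc_discWitness (x u : ℍ[S,c₁,c₂,c₃]) :
    disc (discWitness x u) = (trd x * trd u - 2 * trd (x * star u)) ^ 2 - disc x * disc u := by
  simp only [discWitness, disc, trd, nrd, re_add, re_sub, re_mul, imI_add, imJ_add, imK_add,
    imI_sub, imJ_sub, imK_sub, imI_mul, imJ_mul, imK_mul, re_star, imI_star, imJ_star, imK_star,
    star_sub, star_add, star_mul, star_star, star_coe, re_coe, imI_coe, imJ_coe, imK_coe,
    re_ofNat, imI_ofNat, imJ_ofNat, imK_ofNat, star_ofNat]
  ring

theorem discWitness_mem {R : Subring ℍ[S,c₁,c₂,c₃]} {x u : ℍ[S,c₁,c₂,c₃]} (hx : x ∈ R)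
    (hu : u ∈ R) (htx : (↑(trd x) : ℍ[S,c₁,c₂,c₃]) ∈ R) (htu : (↑(trd u) : ℍ[S,c₁,c₂,c₃]) ∈ R) :
    discWitness x u ∈ R := by
  have hstar : star u ∈ R := by
    rw [show star u = (↑(trd u) : ℍ[S,c₁,c₂,c₃]) - u by rw [← self_add_star_eq_coe_trd]; abel]
    exact sub_mem htu hu
  exact add_mem (sub_mem (mul_mem (mul_mem (ofNat_mem R 2) hx) hstar) (mul_mem htu hx))
    (mul_mem htx hu)

end QuaternionAlgebra

open QuaternionAlgebra

/-- Let `B = ℍ[ℚ, c₁, c₂]` be a definite quaternion algebra over `ℚ` (the reduced norm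
`v ↦ v * star v` is a non-negative rational scalar for every `v`), `R` an order in `B`
(every element of `R` has integral reduced trace and norm), and `x, u ∈ R` with reduced
traces `tx, tu`, reduced norms `nx, nu` and `Tr(x u^∨) = txu`.  Then
`(Disc(x)·Disc(u) − (Tr(x)Tr(u) − 2Tr(xu^∨))²)/4` is a non-negative integer. -/
theorem stmt8 (c₁ c₂ : ℚ)
    (hdef : ∀ v : ℍ[ℚ, c₁, c₂], ∃ q : ℚ, 0 ≤ q ∧ v * star v = (q : ℍ[ℚ, c₁, c₂]))
    (R : Subring ℍ[ℚ, c₁, c₂])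
    (hR : ∀ v ∈ R, ∃ t n : ℤ,
      ((t : ℚ) : ℍ[ℚ, c₁, c₂]) = v + star v ∧ ((n : ℚ) : ℍ[ℚ, c₁, c₂]) = v * star v)
    (x u : ℍ[ℚ, c₁, c₂]) (hx : x ∈ R) (hu : u ∈ R)
    (tx nx tu nu txu : ℤ)
    (htx : ((tx : ℚ) : ℍ[ℚ, c₁, c₂]) = x + star x)
    (hnx : ((nx : ℚ) : ℍ[ℚ, c₁, c₂]) = x * star x)
    (htu : ((tu : ℚ) : ℍ[ℚ, c₁, c₂]) = u + star u)
    (hnu : ((nu : ℚ) : ℍ[ℚ, c₁, c₂]) = u * star u)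
    (htxu : ((txu : ℚ) : ℍ[ℚ, c₁, c₂]) = x * star u + u * star x) :
    ∃ m : ℤ, 0 ≤ m ∧
      4 * m = (tx ^ 2 - 4 * nx) * (tu ^ 2 - 4 * nu) - (tx * tu - 2 * txu) ^ 2 := by
  have coe_intCast_mem (t : ℤ) : ((t : ℚ) : ℍ[ℚ, c₁, c₂]) ∈ R := by
    rw [QuaternionAlgebra.coe_intCast]
    exact intCast_mem R t
  have hw : discWitness x u ∈ R := by
    refine discWitness_mem hx hu ?_ ?_
    · rw [← trd_eq_of_coe_eq htx]; exact coe_intCast_mem tx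
    · rw [← trd_eq_of_coe_eq htu]; exact coe_intCast_mem tu
  obtain ⟨-, n, -, hn⟩ := hR _ hw
  have htxu' : (txu : ℚ) = trd (x * star u) :=
    trd_eq_of_coe_eq (by rwa [star_mul, star_star])
  have hm : (4 * (n - txu ^ 2) : ℚ) = -disc (discWitness x u) := by
    rw [disc, trd_discWitness, nrd_eq_of_coe_eq hn, htxu']
    ring
  refine ⟨n - txu ^ 2, ?_, ?_⟩
  · have hdisc := disc_nonpos_of_forall_nrd_nonneg
      (fun v ↦ let ⟨_, hq, h⟩ := hdef v; nrd_eq_of_coe_eq h.symm ▸ hq) (discWitness x u)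
    exact_mod_cast (by linarith : (0 : ℚ) ≤ n - txu ^ 2)
  · rw [disc_discWitness, disc, disc, ← trd_eq_of_coe_eq htx, ← trd_eq_of_coe_eq htu,
      ← nrd_eq_of_coe_eq hnx, ← nrd_eq_of_coe_eq hnu, ← htxu'] at hm
    exact_mod_cast (show (4 * (n - txu ^ 2) : ℚ) =
      (tx ^ 2 - 4 * nx) * (tu ^ 2 - 4 * nu) - (tx * tu - 2 * txu) ^ 2 by rw [hm]; ring)
end

section
/- Let D > 0 be the discriminant of a real quadratic field, δ a positive integer with D − 4δ a perfect square, and let α_0, α_1, β_0, β_1 ∈ Z and c_K be as in the CM-field setup with both real embeddings of the relative discriminant Disc_{K/F}(η) negative and N_{F/Q}(Disc_{K/F}(η)) = D̃ not a square. Let n ∈ Z satisfy δ^2·D̃ − n^2 > 0 and 2D | (n + c_K δ). Define d_u(n) := (α_1 δ)^2 + 2δ(n + c_K δ)/D. Then d_u(n) < 0. -/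
/-! Write `s = (e₁ + e₂)/2 = c_K + α₁²D/2` for the midpoint of the two conjugates, so that
`D · d_u(n) = 2δ(n + δs)`. As `e₁, e₂ < 0`, AM-GM gives `D̃ = e₁e₂ ≤ s²` with `s < 0`, hence
`n² < δ²D̃ ≤ (δs)²` forces `n < -δs`, i.e. `n + δs < 0`. -/

theorem add_mul_midpoint_neg {α : Type*} [Field α] [LinearOrder α] [IsStrictOrderedRing α]
    {e₁ e₂ δ n : α} (hδ : 0 < δ) (he₁ : e₁ < 0) (he₂ : e₂ < 0)
    (hn : n ^ 2 < δ ^ 2 * (e₁ * e₂)) :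
    n + δ * ((e₁ + e₂) / 2) < 0 := by
  have hmid : 0 ≤ δ * -((e₁ + e₂) / 2) := by nlinarith
  have hamgm : δ ^ 2 * (e₁ * e₂) ≤ (δ * -((e₁ + e₂) / 2)) ^ 2 := by
    nlinarith [four_mul_le_sq_add e₁ e₂, sq_nonneg δ]
  have hlt : n < δ * -((e₁ + e₂) / 2) :=
    (le_abs_self n).trans_lt (abs_lt_of_sq_lt_sq (hn.trans_le hamgm) hmid)
  linarith

theorem stmt12_general (D δ α₀ α₁ β₁ cK n Dt : ℤ)
    (hD : 0 < D) (hδ : 0 < δ)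
    (e₁ e₂ : ℝ)
    (he₁ : e₁ = (cK : ℝ) + (α₁ : ℝ) ^ 2 * (D : ℝ) / 2 +
      Real.sqrt (D : ℝ) * ((α₀ : ℝ) * (α₁ : ℝ) + (α₁ : ℝ) ^ 2 * (D : ℝ) / 2 - 2 * (β₁ : ℝ)))
    (he₂ : e₂ = (cK : ℝ) + (α₁ : ℝ) ^ 2 * (D : ℝ) / 2 -
      Real.sqrt (D : ℝ) * ((α₀ : ℝ) * (α₁ : ℝ) + (α₁ : ℝ) ^ 2 * (D : ℝ) / 2 - 2 * (β₁ : ℝ)))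
    (hneg₁ : e₁ < 0) (hneg₂ : e₂ < 0) (hprod : e₁ * e₂ = (Dt : ℝ))
    (hpos : 0 < δ ^ 2 * Dt - n ^ 2) :
    ((α₁ * δ : ℤ) : ℚ) ^ 2 + 2 * (δ : ℚ) * ((n : ℚ) + (cK : ℚ) * (δ : ℚ)) / (D : ℚ) < 0 := by
  have hn : (n : ℝ) ^ 2 < (δ : ℝ) ^ 2 * (e₁ * e₂) := by
    rw [hprod]; exact_mod_cast sub_pos.mp hpos
  have hmid : (e₁ + e₂) / 2 = (cK : ℝ) + (α₁ : ℝ) ^ 2 * D / 2 := by rw [he₁, he₂]; ring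
  have key := add_mul_midpoint_neg (by exact_mod_cast hδ) hneg₁ hneg₂ hn
  rw [hmid] at key
  have hDR : (0 : ℝ) < D := by exact_mod_cast hD
  have hdu : (((α₁ * δ : ℤ) : ℚ) ^ 2 + 2 * (δ : ℚ) * ((n : ℚ) + (cK : ℚ) * (δ : ℚ)) / (D : ℚ) : ℝ)
      = 2 * δ * (n + δ * (cK + (α₁ : ℝ) ^ 2 * D / 2)) / D := by
    push_cast; field_simp; ring
  have hδR : (0 : ℝ) < 2 * δ := by positivity
  exact_mod_cast hdu ▸ div_neg_of_neg_of_pos (mul_neg_of_pos_of_neg hδR key) hDR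

/-- With `D > 0` the discriminant of a real quadratic field, `δ > 0` with `D − 4δ` a square,
`c_K` the integer with `4c_K = 4α₀² + 4α₀α₁D + α₁²(D²−D) − 16β₀ − 8β₁D`, both real
embeddings `e₁, e₂` of `Disc_{K/F}(η) = c_K + α₁²D/2 ± √D(α₀α₁ + α₁²D/2 − 2β₁)` negative
with product `D̃` not a square, and `n` with `δ²D̃ − n² > 0` and `2D ∣ n + c_Kδ`, the
quantity `d_u(n) = (α₁δ)² + 2δ(n + c_Kδ)/D` is negative. -/
theorem stmt12 (D δ α₀ α₁ β₀ β₁ cK n Dt : ℤ)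
    (hD : 0 < D) (hδ : 0 < δ) (hsq : ∃ m : ℤ, D - 4 * δ = m ^ 2)
    (hcK : 4 * cK = 4 * α₀ ^ 2 + 4 * α₀ * α₁ * D + α₁ ^ 2 * (D ^ 2 - D)
      - 16 * β₀ - 8 * β₁ * D)
    (e₁ e₂ : ℝ)
    (he₁ : e₁ = (cK : ℝ) + (α₁ : ℝ) ^ 2 * (D : ℝ) / 2 +
      Real.sqrt (D : ℝ) * ((α₀ : ℝ) * (α₁ : ℝ) + (α₁ : ℝ) ^ 2 * (D : ℝ) / 2 - 2 * (β₁ : ℝ)))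
    (he₂ : e₂ = (cK : ℝ) + (α₁ : ℝ) ^ 2 * (D : ℝ) / 2 -
      Real.sqrt (D : ℝ) * ((α₀ : ℝ) * (α₁ : ℝ) + (α₁ : ℝ) ^ 2 * (D : ℝ) / 2 - 2 * (β₁ : ℝ)))
    (hneg₁ : e₁ < 0) (hneg₂ : e₂ < 0) (hprod : e₁ * e₂ = (Dt : ℝ))
    (hDtns : ¬ ∃ m : ℤ, Dt = m ^ 2)
    (hpos : 0 < δ ^ 2 * Dt - n ^ 2) (hdvd : 2 * D ∣ (n + cK * δ)) :
    ((α₁ * δ : ℤ) : ℚ) ^ 2 + 2 * (δ : ℚ) * ((n : ℚ) + (cK : ℚ) * (δ : ℚ)) / (D : ℚ) < 0 :=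
  stmt12_general D δ α₀ α₁ β₁ cK n Dt hD hδ e₁ e₂ he₁ he₂ hneg₁ hneg₂ hprod hpos
end

section
/- Let R = Mat_2(Z_p), and let I, J be left ideals of R generated by [[p^{n},t],[0,p^{m}]] and [[p^{n'},t'],[0,p^{m'}]] respectively. Then I ⊆ J if and only if n ≥ n', m ≥ m', and t ≡ t'·p^{n−n'} (mod p^{m'}). -/
/-!
If `C * B = A` with `B` upper triangular with nonzero `(0,0)` entry over a domain, then `C` is
upper triangular too. So `A` lies in the left ideal of `B` iff its diagonal entries are multiples
of those of `B` and the off-diagonal entry matches modulo the lower-right entry of `B`; with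
diagonal entries powers of the non-unit `p`, the multiples are forced to be powers of `p`.
-/

open Matrix

theorem mul_pow_eq_pow_iff {M : Type*} [CommMonoidWithZero M] [IsCancelMulZero M] {π : M}
    (hπ : π ≠ 0) (hπu : ¬IsUnit π) {x : M} {k n : ℕ} : x * π ^ k = π ^ n ↔ k ≤ n ∧ x = π ^ (n - k) := by
  constructor
  · intro h
    have hkn : k ≤ n := (pow_dvd_pow_iff hπ hπu).1 ⟨x, by rw [← h, mul_comm]⟩
    refine ⟨hkn, mul_right_cancel₀ (pow_ne_zero k hπ) ?_⟩
    rw [h, ← pow_add, Nat.sub_add_cancel hkn]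
  · rintro ⟨hkn, rfl⟩
    rw [← pow_add, Nat.sub_add_cancel hkn]

section UpperTriangular

variable {R : Type*} [CommRing R] [IsDomain R]

theorem exists_mul_upperTriangular_fin_two_eq_iff {a b d a' b' d' : R} (ha : a ≠ 0) :
    (∃ C : Matrix (Fin 2) (Fin 2) R, C * !![a, b; 0, d] = !![a', b'; 0, d']) ↔
      (∃ x, x * a = a' ∧ d ∣ b' - x * b) ∧ d ∣ d' := by
  constructor
  · rintro ⟨C, hC⟩
    rw [eta_fin_two C, mul_fin_two, ← Matrix.ext_iff] at hC
    have h00 := hC 0 0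
    have h01 := hC 0 1
    have h10 := hC 1 0
    have h11 := hC 1 1
    simp only [of_apply, cons_val', cons_val_zero, cons_val_one, empty_val', cons_val_fin_one,
      mul_zero, add_zero] at h00 h01 h10 h11
    have hC10 : C 1 0 = 0 := (mul_eq_zero.1 h10).resolve_right ha
    rw [hC10, zero_mul, zero_add] at h11
    exact ⟨⟨C 0 0, h00, C 0 1, by rw [← h01]; ring⟩, C 1 1, by rw [← h11, mul_comm]⟩
  · rintro ⟨⟨x, rfl, y, hy⟩, z, rfl⟩
    obtain rfl := sub_eq_iff_eq_add'.1 hy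
    refine ⟨!![x, y; 0, z], ?_⟩
    simp [mul_comm]

theorem span_upperTriangular_pow_le_iff {π : R} (hπ : π ≠ 0) (hπu : ¬IsUnit π)
    (n m n' m' : ℕ) (t t' : R) :
    Ideal.span {!![π ^ n, t; 0, π ^ m]} ≤ Ideal.span {!![π ^ n', t'; 0, π ^ m']} ↔
      n' ≤ n ∧ m' ≤ m ∧ π ^ m' ∣ t - t' * π ^ (n - n') := by
  rw [Ideal.span_singleton_le_iff_mem, Ideal.mem_span_singleton',
    exists_mul_upperTriangular_fin_two_eq_iff (pow_ne_zero n' hπ),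
    pow_dvd_pow_iff hπ hπu]
  simp only [mul_pow_eq_pow_iff hπ hπu, and_assoc, exists_and_left, exists_eq_left, mul_comm t']
  tauto

end UpperTriangular

/-- Containment of left ideals in `Mat₂(ℤ_p)`: the left ideal generated by
`[[p^n,t],[0,p^m]]` is contained in the one generated by `[[p^{n'},t'],[0,p^{m'}]]` iff
`n ≥ n'`, `m ≥ m'` and `t ≡ t'·p^{n−n'} (mod p^{m'})`. -/
theorem stmt16 (p : ℕ) [Fact p.Prime] (n m n' m' : ℕ) (t t' : ℤ_[p]) :
    Ideal.span {genMat p n m t} ≤ Ideal.span {genMat p n' m' t'} ↔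
      (n' ≤ n ∧ m' ≤ m ∧ (p : ℤ_[p]) ^ m' ∣ (t - t' * (p : ℤ_[p]) ^ (n - n'))) :=
  span_upperTriangular_pow_le_iff PadicInt.irreducible_p.ne_zero
    PadicInt.irreducible_p.not_isUnit n m n' m' t t'
end

section
/- Let Λ_1, Λ_2 ∈ End(E_1 × E_2) be endomorphisms of a product of elliptic curves, written as 2×2 matrices of homomorphisms, satisfying Λ_1 Λ_2 = Λ_2 Λ_1, Λ_2 + Λ_2^∨ = α_0 + α_1 Λ_1, Λ_2 Λ_2^∨ = β_0 + β_1 Λ_1, and Λ_1^2 − D Λ_1 + (D^2 − D)/4 = 0, where ∨ is the Rosati involution of the product polarization (entrywise dual with transposition). If Λ_1 = [[a, b],[b^∨, D−a]] with a ∈ Z and Λ_2 = [[x, y],[α_1 b^∨ − y^∨, z]], then: Nrd(b) = (D − (D−2a)^2)/4, Tr(y b^∨) = Nrd(b)·α_1, Tr(x) = α_0 + a·α_1, Tr(z) = α_0 + (D−a)·α_1, Nrd(x) + Nrd(y) = β_0 + a·β_1, Nrd(z) + Nrd(y) = β_0 + (D−a)·β_1, β_1 b = α_1 x b − x y + y z^∨,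 and b z = x b + (D − 2a)·y. -/
/-!
The idempotents `e₁, e₂` give the Peirce decomposition `u ↦ (eᵢ u eⱼ)ᵢⱼ`, a ring homomorphism
from `A` to `2 × 2` matrices over `A`, under which an anti-homomorphism `σ` fixing `e₁, e₂`
becomes entrywise `σ` followed by transposition. It sends `Λ₁`, `Λ₂`, `σ Λ₂` and `1` to the block
matrices of the statement, so the eight identities are entries of the four matrix relations.
The only non-immediate one is the `(2,2)` entry of the norm relation, where the cross terms
`σ b * y + σ y * b` are eliminated with the `(2,2)` entry of the commutation relation.
-/

open Matrix

section Peirce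

variable {ι A : Type*} [Ring A]

def peirceMatrix (e : ι → A) : A →+ Matrix ι ι A where
  toFun u := of fun i j => e i * u * e j
  map_zero' := by ext; simp
  map_add' u v := by ext; simp only [of_apply, Matrix.add_apply, mul_add, add_mul]

lemma peirceMatrix_apply (e : ι → A) (u : A) (i j : ι) :
    peirceMatrix e u i j = e i * u * e j := rfl

lemma peirceMatrix_eq_transpose_map_of_antimul {e : ι → A} {σ : A → A}
    (hσmul : ∀ s t : A, σ (s * t) = σ t * σ s) (hσe : ∀ i, σ (e i) = e i) (u : A) :
    peirceMatrix e (σ u) = ((peirceMatrix e u).map σ)ᵀ := by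
  ext i j
  simp only [transpose_apply, map_apply, peirceMatrix_apply, hσmul, hσe, mul_assoc]

variable [Fintype ι] {e : ι → A}

namespace CompleteOrthogonalIdempotents

lemma peirceMatrix_mul (he : CompleteOrthogonalIdempotents e) (u v : A) :
    peirceMatrix e (u * v) = peirceMatrix e u * peirceMatrix e v := by
  ext i j
  calc e i * (u * v) * e j = ∑ k, e i * u * e k * v * e j := by
        simp only [← Finset.sum_mul, ← Finset.mul_sum, he.complete, one_mul, mul_assoc]
    _ = ∑ k, e i * u * e k * (e k * v * e j) := by
        simp only [mul_assoc, (he.idem _).mul_self_mul]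

lemma peirceMatrix_one [DecidableEq ι] (he : CompleteOrthogonalIdempotents e) :
    peirceMatrix e 1 = diagonal e := by
  ext i j
  rw [peirceMatrix_apply, mul_one, he.mul_eq, diagonal_apply]

lemma peirceMatrix_eq_single [DecidableEq ι] (he : CompleteOrthogonalIdempotents e) {i j : ι}
    {u : A} (hu : e i * u * e j = u) : peirceMatrix e u = Matrix.single i j u := by
  ext k l
  rw [peirceMatrix_apply, single_apply]
  split_ifs with hkl
  · obtain ⟨rfl, rfl⟩ := hkl
    rw [← hu, ← mul_assoc, ← mul_assoc, (he.idem i).eq, mul_assoc, (he.idem j).eq, hu]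
  · rw [← hu, ← mul_assoc, ← mul_assoc, mul_assoc _ _ (e l)]
    rcases not_and_or.mp hkl with hik | hjl
    · rw [he.ortho (Ne.symm hik), zero_mul, zero_mul]
    · rw [he.ortho hjl, mul_zero]

end CompleteOrthogonalIdempotents

end Peirce

lemma IsIdempotentElem.mul_eq_right_of_mul_mul_eq {A : Type*} [Semigroup A] {e f u : A}
    (he : IsIdempotentElem e) (hu : e * u * f = u) : e * u = u := by
  rw [← hu, ← mul_assoc, ← mul_assoc, he.eq]

lemma IsIdempotentElem.mul_eq_left_of_mul_mul_eq {A : Type*} [Semigroup A] {e f u : A}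
    (hf : IsIdempotentElem f) (hu : e * u * f = u) : u * f = u := by
  rw [← hu, mul_assoc, hf.eq]

section Block

variable {A : Type*} [Ring A] {e₁ e₂ : A}

lemma CompleteOrthogonalIdempotents.peirceMatrix_fin_two
    (he : CompleteOrthogonalIdempotents ![e₁, e₂]) {u₁₁ u₁₂ u₂₁ u₂₂ : A}
    (h₁₁ : e₁ * u₁₁ * e₁ = u₁₁) (h₁₂ : e₁ * u₁₂ * e₂ = u₁₂) (h₂₁ : e₂ * u₂₁ * e₁ = u₂₁)
    (h₂₂ : e₂ * u₂₂ * e₂ = u₂₂) :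
    peirceMatrix ![e₁, e₂] (u₁₁ + u₁₂ + u₂₁ + u₂₂) = !![u₁₁, u₁₂; u₂₁, u₂₂] := by
  rw [map_add, map_add, map_add, he.peirceMatrix_eq_single (i := 0) (j := 0) h₁₁,
    he.peirceMatrix_eq_single (i := 0) (j := 1) h₁₂,
    he.peirceMatrix_eq_single (i := 1) (j := 0) h₂₁,
    he.peirceMatrix_eq_single (i := 1) (j := 1) h₂₂]
  ext i j
  fin_cases i <;> fin_cases j <;> simp

lemma peirceMatrix_fin_two_of_antimul {σ : A → A} (hσmul : ∀ s t : A, σ (s * t) = σ t * σ s)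
    (hσe₁ : σ e₁ = e₁) (hσe₂ : σ e₂ = e₂) {u u₁₁ u₁₂ u₂₁ u₂₂ : A}
    (hu : peirceMatrix ![e₁, e₂] u = !![u₁₁, u₁₂; u₂₁, u₂₂]) :
    peirceMatrix ![e₁, e₂] (σ u) = !![σ u₁₁, σ u₂₁; σ u₁₂, σ u₂₂] := by
  rw [peirceMatrix_eq_transpose_map_of_antimul hσmul (Fin.forall_fin_two.mpr ⟨hσe₁, hσe₂⟩), hu]
  ext i j
  fin_cases i <;> fin_cases j <;> rfl

lemma block_entry_identities (he₁ : IsIdempotentElem e₁) (he₂ : IsIdempotentElem e₂)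
    {D a α₀ α₁ β₀ β₁ q : ℤ} (hq : 4 * q = D ^ 2 - D) {x y b z x' y' b' z' : A}
    (hx : e₁ * x * e₁ = x) (hy : e₁ * y * e₂ = y) (hz : e₂ * z * e₂ = z)
    (hcomm : !![a • e₁, b; b', (D - a) • e₂] * !![x, y; α₁ • b' - y', z] =
      !![x, y; α₁ • b' - y', z] * !![a • e₁, b; b', (D - a) • e₂])
    (htr : !![x, y; α₁ • b' - y', z] + !![x', α₁ • b - y; y', z'] =
      α₀ • !![e₁, 0; 0, e₂] + α₁ • !![a • e₁, b; b', (D - a) • e₂])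
    (hnrm : !![x, y; α₁ • b' - y', z] * !![x', α₁ • b - y; y', z'] =
      β₀ • !![e₁, 0; 0, e₂] + β₁ • !![a • e₁, b; b', (D - a) • e₂])
    (hquad : !![a • e₁, b; b', (D - a) • e₂] * !![a • e₁, b; b', (D - a) • e₂] -
      D • !![a • e₁, b; b', (D - a) • e₂] + q • !![e₁, 0; 0, e₂] = 0) :
    (∃ nb : ℤ, 4 * nb = D - (D - 2 * a) ^ 2 ∧ b * b' = nb • e₁ ∧
      y * b' + b * y' = (nb * α₁) • e₁) ∧
    x + x' = (α₀ + a * α₁) • e₁ ∧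
    z + z' = (α₀ + (D - a) * α₁) • e₂ ∧
    x * x' + y * y' = (β₀ + a * β₁) • e₁ ∧
    z * z' + y' * y = (β₀ + (D - a) * β₁) • e₂ ∧
    β₁ • b = α₁ • (x * b) - x * y + y * z' ∧
    b * z = x * b + (D - 2 * a) • y := by
  simp only [mul_fin_two] at hcomm hnrm hquad
  have q₀₀ := congrFun₂ hquad 0 0
  have c₀₀ := congrFun₂ hcomm 0 0
  have c₀₁ := congrFun₂ hcomm 0 1
  have c₁₁ := congrFun₂ hcomm 1 1
  have t₀₀ := congrFun₂ htr 0 0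
  have t₁₁ := congrFun₂ htr 1 1
  have n₀₀ := congrFun₂ hnrm 0 0
  have n₀₁ := congrFun₂ hnrm 0 1
  have n₁₁ := congrFun₂ hnrm 1 1
  simp only [Matrix.add_apply, Matrix.sub_apply, Matrix.smul_apply, Matrix.zero_apply, of_apply,
    cons_val', cons_val_zero, cons_val_one, cons_val_fin_one, empty_val',
    mul_sub, sub_mul, smul_mul_assoc, mul_smul_comm, smul_smul, he₁.eq, he₂.eq,
    he₁.mul_eq_right_of_mul_mul_eq hx, he₁.mul_eq_left_of_mul_mul_eq hx,
    he₁.mul_eq_right_of_mul_mul_eq hy, he₂.mul_eq_left_of_mul_mul_eq hy,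
    he₂.mul_eq_right_of_mul_mul_eq hz, he₂.mul_eq_left_of_mul_mul_eq hz]
    at q₀₀ c₀₀ c₀₁ c₁₁ t₀₀ t₁₁ n₀₀ n₀₁ n₁₁
  refine ⟨⟨a * D - a ^ 2 - q, by linear_combination -hq, ?_, ?_⟩, ?_, ?_, ?_, ?_, ?_, ?_⟩
  · linear_combination (norm := module) q₀₀
  · linear_combination (norm := module) α₁ • q₀₀ - c₀₀
  · linear_combination (norm := module) t₀₀
  · linear_combination (norm := module) t₁₁
  · linear_combination (norm := module) n₀₀
  · linear_combination (norm := module) n₁₁ + α₁ • c₁₁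
  · linear_combination (norm := module) -n₀₁
  · linear_combination (norm := module) c₀₁

end Block

theorem stmt17_general (A : Type*) [Ring A] (σ : A → A)
    (hσadd : ∀ s t : A, σ (s + t) = σ s + σ t)
    (hσmul : ∀ s t : A, σ (s * t) = σ t * σ s)
    (hσinv : ∀ s : A, σ (σ s) = s)
    (e₁ e₂ : A) (hsum : e₁ + e₂ = 1) (h12 : e₁ * e₂ = 0) (h21 : e₂ * e₁ = 0)
    (hσe₁ : σ e₁ = e₁) (hσe₂ : σ e₂ = e₂)
    (D a α₀ α₁ β₀ β₁ q : ℤ) (hq : 4 * q = D ^ 2 - D)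
    (x y b z : A)
    (hx : e₁ * x * e₁ = x) (hy : e₁ * y * e₂ = y)
    (hb : e₁ * b * e₂ = b) (hz : e₂ * z * e₂ = z)
    (Λ₁ Λ₂ : A)
    (hΛ₁ : Λ₁ = a • e₁ + (D - a) • e₂ + b + σ b)
    (hΛ₂ : Λ₂ = x + y + (α₁ • σ b - σ y) + z)
    (hcomm : Λ₁ * Λ₂ = Λ₂ * Λ₁)
    (htr : Λ₂ + σ Λ₂ = α₀ • (1 : A) + α₁ • Λ₁)
    (hnrm : Λ₂ * σ Λ₂ = β₀ • (1 : A) + β₁ • Λ₁)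
    (hquad : Λ₁ * Λ₁ - D • Λ₁ + q • (1 : A) = 0) :
    (∃ nb : ℤ, 4 * nb = D - (D - 2 * a) ^ 2 ∧ b * σ b = nb • e₁ ∧
      y * σ b + b * σ y = (nb * α₁) • e₁) ∧
    x + σ x = (α₀ + a * α₁) • e₁ ∧
    z + σ z = (α₀ + (D - a) * α₁) • e₂ ∧
    x * σ x + y * σ y = (β₀ + a * β₁) • e₁ ∧
    z * σ z + σ y * y = (β₀ + (D - a) * β₁) • e₂ ∧
    β₁ • b = α₁ • (x * b) - x * y + y * σ z ∧
    b * z = x * b + (D - 2 * a) • y := by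
  have hE : CompleteOrthogonalIdempotents ![e₁, e₂] :=
    CompleteOrthogonalIdempotents.pair_iff'ₛ.mpr ⟨h12, h21, hsum⟩
  have he₁ : IsIdempotentElem e₁ := hE.idem 0
  have he₂ : IsIdempotentElem e₂ := hE.idem 1
  have hσcorner {u : A} (hu : e₁ * u * e₂ = u) : e₂ * σ u * e₁ = σ u := by
    conv_rhs => rw [← hu]
    rw [hσmul, hσmul, hσe₁, hσe₂, mul_assoc]
  let P := peirceMatrix ![e₁, e₂]
  have hP₁ : P Λ₁ = !![a • e₁, b; σ b, (D - a) • e₂] := by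
    rw [show Λ₁ = a • e₁ + b + σ b + (D - a) • e₂ by rw [hΛ₁]; abel]
    exact hE.peirceMatrix_fin_two (by simp only [smul_mul_assoc, mul_smul_comm, he₁.eq])
      hb (hσcorner hb) (by simp only [smul_mul_assoc, mul_smul_comm, he₂.eq])
  have hP₂ : P Λ₂ = !![x, y; α₁ • σ b - σ y, z] := by
    rw [hΛ₂]
    refine hE.peirceMatrix_fin_two hx hy ?_ hz
    simp only [mul_sub, sub_mul, mul_smul_comm, smul_mul_assoc, hσcorner hb, hσcorner hy]
  have hP₂σ : P (σ Λ₂) = !![σ x, α₁ • b - y; σ y, σ z] := by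
    have hσ₂₁ : σ (α₁ • σ b - σ y) = α₁ • b - y := by
      rw [← AddMonoidHom.mk'_apply σ hσadd, map_sub, map_zsmul]
      simp only [AddMonoidHom.mk'_apply, hσinv]
    rw [peirceMatrix_fin_two_of_antimul hσmul hσe₁ hσe₂ hP₂, hσ₂₁]
  have hP1 : P 1 = !![e₁, 0; 0, e₂] := by
    rw [hE.peirceMatrix_one, diagonal_fin_two]; rfl
  have hPmul : ∀ u v, P (u * v) = P u * P v := hE.peirceMatrix_mul
  refine block_entry_identities he₁ he₂ hq hx hy hz ?_ ?_ ?_ ?_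
  · simpa only [hPmul, hP₁, hP₂] using congrArg P hcomm
  · simpa only [map_add, map_zsmul, hP₁, hP₂, hP₂σ, hP1] using congrArg P htr
  · simpa only [hPmul, map_add, map_zsmul, hP₁, hP₂, hP₂σ, hP1] using congrArg P hnrm
  · simpa only [hPmul, map_add, map_sub, map_zsmul, map_zero, hP₁, hP1] using congrArg P hquad

/-- Abstract formalization of the expansion of the embedding-problem relations.
The ring `A` plays the role of `End(E₁ × E₂)`, with anti-involution `σ` (the Rosati
involution of the product polarization) and orthogonal symmetric idempotents `e₁, e₂`
(the projections onto the factors).  Elements `x ∈ e₁Ae₁ = End(E₁)`,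
`y, b ∈ e₁Ae₂ = Hom(E₂,E₁)`, `z ∈ e₂Ae₂ = End(E₂)`.  With
`Λ₁ = [[a, b],[b^∨, D−a]] = a•e₁ + (D−a)•e₂ + b + σ b` and
`Λ₂ = [[x, y],[α₁ b^∨ − y^∨, z]] = x + y + (α₁•σ b − σ y) + z` satisfying the four
relations, the eight entrywise conclusions (2.2) of the paper hold; reduced norms and
traces of entries are expressed as scalar multiples of the corner idempotents,
e.g. `Nrd(b) = b·σ b = nb•e₁` with `4·nb = D − (D−2a)²`. -/
theorem stmt17 (A : Type*) [Ring A] (σ : A → A)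
    (hσadd : ∀ s t : A, σ (s + t) = σ s + σ t)
    (hσmul : ∀ s t : A, σ (s * t) = σ t * σ s)
    (hσinv : ∀ s : A, σ (σ s) = s)
    (e₁ e₂ : A) (hsum : e₁ + e₂ = 1) (h12 : e₁ * e₂ = 0) (h21 : e₂ * e₁ = 0)
    (he₁ : e₁ * e₁ = e₁) (he₂ : e₂ * e₂ = e₂) (hσe₁ : σ e₁ = e₁) (hσe₂ : σ e₂ = e₂)
    (D a α₀ α₁ β₀ β₁ q : ℤ) (hq : 4 * q = D ^ 2 - D)
    (x y b z : A)
    (hx : e₁ * x * e₁ = x) (hy : e₁ * y * e₂ = y)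
    (hb : e₁ * b * e₂ = b) (hz : e₂ * z * e₂ = z)
    (Λ₁ Λ₂ : A)
    (hΛ₁ : Λ₁ = a • e₁ + (D - a) • e₂ + b + σ b)
    (hΛ₂ : Λ₂ = x + y + (α₁ • σ b - σ y) + z)
    (hcomm : Λ₁ * Λ₂ = Λ₂ * Λ₁)
    (htr : Λ₂ + σ Λ₂ = α₀ • (1 : A) + α₁ • Λ₁)
    (hnrm : Λ₂ * σ Λ₂ = β₀ • (1 : A) + β₁ • Λ₁)
    (hquad : Λ₁ * Λ₁ - D • Λ₁ + q • (1 : A) = 0) :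
    (∃ nb : ℤ, 4 * nb = D - (D - 2 * a) ^ 2 ∧ b * σ b = nb • e₁ ∧
      y * σ b + b * σ y = (nb * α₁) • e₁) ∧
    x + σ x = (α₀ + a * α₁) • e₁ ∧
    z + σ z = (α₀ + (D - a) * α₁) • e₂ ∧
    x * σ x + y * σ y = (β₀ + a * β₁) • e₁ ∧
    z * σ z + σ y * y = (β₀ + (D - a) * β₁) • e₂ ∧
    β₁ • b = α₁ • (x * b) - x * y + y * σ z ∧
    b * z = x * b + (D - 2 * a) • y :=
  stmt17_general A σ hσadd hσmul hσinv e₁ e₂ hsum h12 h21 hσe₁ hσe₂ D a α₀ α₁ β₀ β₁ q hq x y b z hx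
    hy hb hz Λ₁ Λ₂ hΛ₁ hΛ₂ hcomm htr hnrm hquad
end
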